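/- arXiv:0906.3723 — 4 statements merged into one kernel-verified Lean document; each statement's English description precedes it below -/
import Mathlib

section
/- A permutation class C is monotone griddable if and only if C contains neither the class ⊕21 nor the class ⊖12, i.e. neither ⊕21 ⊆ C nor ⊖12 ⊆ C. -/
/-! Core definitions: finite permutations, pattern containment, permutation
classes, partial well-order, monotone classes, simple permutations,
direct/skew sums, grid classes and the graph of a gridding matrix. -/

/-- A finite permutation: a length `n` together with a bijection of `Fin n`. -/
abbrev Perm' : Type := Σ n : ℕ, Equiv.Perm (Fin n)

namespace Perm'

/-- Pattern containment: `σ.Le π` means that `σ` is contained in `π`,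
i.e. some subsequence of `π` is order isomorphic to `σ`. -/
def Le (σ π : Perm') : Prop :=
  ∃ f : Fin σ.1 → Fin π.1, StrictMono f ∧
    ∀ a b : Fin σ.1, (σ.2 a < σ.2 b ↔ π.2 (f a) < π.2 (f b))

/-- The inverse of a permutation. -/
def inverse (π : Perm') : Perm' := ⟨π.1, π.2.symm⟩

/-- The reverse of a permutation: `r(π)(i) = π(k+1-i)`. -/
def reverse (π : Perm') : Perm' := ⟨π.1, Fin.revPerm.trans π.2⟩

/-- The complement of a permutation: `c(π)(i) = k+1-π(i)`. -/
def complement (π : Perm') : Perm' := ⟨π.1, π.2.trans Fin.revPerm⟩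

/-- The direct sum `σ ⊕ τ` of two permutations. -/
def dsum (σ τ : Perm') : Perm' :=
  ⟨σ.1 + τ.1, finSumFinEquiv.symm.trans ((Equiv.sumCongr σ.2 τ.2).trans finSumFinEquiv)⟩

/-- The skew sum `σ ⊖ τ` of two permutations. -/
def skewSum (σ τ : Perm') : Perm' :=
  ⟨σ.1 + τ.1, finSumFinEquiv.symm.trans ((Equiv.sumCongr σ.2 τ.2).trans
    ((Equiv.sumComm (Fin σ.1) (Fin τ.1)).trans
      (finSumFinEquiv.trans (finCongr (Nat.add_comm τ.1 σ.1)))))⟩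

end Perm'

/-- The empty permutation. -/
def emptyPerm : Perm' := ⟨0, 1⟩

/-- The permutation 12. -/
def perm12 : Perm' := ⟨2, 1⟩

/-- The permutation 21. -/
def perm21 : Perm' := ⟨2, Equiv.swap 0 1⟩

/-- A permutation class: a set of permutations closed downward under containment. -/
def IsPermClass (C : Set Perm') : Prop := ∀ π ∈ C, ∀ σ : Perm', σ.Le π → σ ∈ C

/-- An antichain: a set of pairwise incomparable permutations. -/
def IsPermAntichain (A : Set Perm') : Prop := ∀ α ∈ A, ∀ β ∈ A, α ≠ β → ¬ α.Le β

/-- A set of permutations is partially well-ordered if it contains no infinite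
antichain. (Note that pairwise incomparability forces injectivity of `g`.) -/
def IsPwo (C : Set Perm') : Prop :=
  ¬ ∃ g : ℕ → Perm', (∀ i, g i ∈ C) ∧ ∀ i j : ℕ, i ≠ j → ¬ (g i).Le (g j)

/-- `Av(21)`: the class of increasing permutations. -/
def Av21 : Set Perm' := {π | ∀ a b : Fin π.1, a ≤ b → π.2 a ≤ π.2 b}

/-- `Av(12)`: the class of decreasing permutations. -/
def Av12 : Set Perm' := {π | ∀ a b : Fin π.1, a ≤ b → π.2 b ≤ π.2 a}

/-- The monotone classes. -/
def IsMonotoneClass (C : Set Perm') : Prop := C = Av21 ∨ C = Av12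

/-- A permutation is simple if it has no interval of size strictly between 1 and
its length: whenever the set of positions `[a,b]` is mapped onto a contiguous
set of values, either `a = b` or `[a,b]` is everything. -/
def IsSimple (π : Perm') : Prop :=
  ∀ a b : Fin π.1, a ≤ b →
    (∃ c : ℕ, ∀ i : Fin π.1,
      ((a ≤ i ∧ i ≤ b) ↔ (c ≤ (π.2 i : ℕ) ∧ (π.2 i : ℕ) ≤ c + ((b : ℕ) - (a : ℕ))))) →
    (a = b ∨ (b : ℕ) - (a : ℕ) + 1 = π.1)

/-- The class `⊕21` of all direct sums of patterns of `21`. -/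
def sumClosure21 : Set Perm' :=
  {π | ∃ L : List Perm', (∀ α ∈ L, α.Le perm21) ∧ π = L.foldr Perm'.dsum emptyPerm}

/-- The class `⊖12` of all skew sums of patterns of `12`. -/
def skewClosure12 : Set Perm' :=
  {π | ∃ L : List Perm', (∀ α ∈ L, α.Le perm12) ∧ π = L.foldr Perm'.skewSum emptyPerm}

/-- The set of points of `π` indexed by `S` is order isomorphic to `τ`. -/
def IsPatternOf (π : Perm') (S : Set (Fin π.1)) (τ : Perm') : Prop :=
  ∃ g : Fin τ.1 → Fin π.1, StrictMono g ∧ (∀ a, g a ∈ S) ∧ (∀ i ∈ S, ∃ a, g a = i) ∧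
    ∀ a b : Fin τ.1, (τ.2 a < τ.2 b ↔ π.2 (g a) < π.2 (g b))

/-- A gridding of a permutation `π` into an `m × n` grid, recorded as the induced
cell assignment `κ` of the points of `π`: columns are weakly increasing in
position and rows weakly increasing in value.  (This is equivalent to recording
the `m-1` vertical and `n-1` horizontal dividing lines.) -/
def IsGridding {m n : ℕ} (π : Perm') (κ : Fin π.1 → Fin m × Fin n) : Prop :=
  (∀ i i' : Fin π.1, i ≤ i' → (κ i).1 ≤ (κ i').1) ∧
  (∀ i i' : Fin π.1, π.2 i ≤ π.2 i' → (κ i).2 ≤ (κ i').2)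

/-- An `M`-gridding: a gridding in which the content of each cell `(s,t)` is
empty or order isomorphic to a member of `M s t`. -/
def IsMGridding {m n : ℕ} (M : Fin m → Fin n → Set Perm') (π : Perm')
    (κ : Fin π.1 → Fin m × Fin n) : Prop :=
  IsGridding π κ ∧
  ∀ s : Fin m, ∀ t : Fin n,
    (∀ i, κ i ≠ (s, t)) ∨ ∃ τ ∈ M s t, IsPatternOf π {i | κ i = (s, t)} τ

/-- `π` is `M`-griddable. -/
def Griddable {m n : ℕ} (M : Fin m → Fin n → Set Perm') (π : Perm') : Prop :=
  ∃ κ, IsMGridding M π κ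

/-- The grid class of `M`: all `M`-griddable permutations. -/
def GridClass {m n : ℕ} (M : Fin m → Fin n → Set Perm') : Set Perm' :=
  {π | Griddable M π}

/-- A gridding matrix: every entry is an infinite permutation class or empty. -/
def IsGriddingMatrix {m n : ℕ} (M : Fin m → Fin n → Set Perm') : Prop :=
  ∀ i j, (IsPermClass (M i j) ∧ (M i j).Infinite) ∨ M i j = ∅

/-- The non-empty cells of `M`: the vertices of the graph of `M`. -/
def GridCell {m n : ℕ} (M : Fin m → Fin n → Set Perm') : Type :=
  {p : Fin m × Fin n // M p.1 p.2 ≠ ∅}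

/-- Adjacency for the graph of `M`: two cells sharing a row or a column with
only empty cells in between. -/
def GridAdj {m n : ℕ} (M : Fin m → Fin n → Set Perm') (p q : Fin m × Fin n) : Prop :=
  p ≠ q ∧
  ((p.2 = q.2 ∧ ∀ i : Fin m, min p.1 q.1 < i → i < max p.1 q.1 → M i p.2 = ∅) ∨
   (p.1 = q.1 ∧ ∀ j : Fin n, min p.2 q.2 < j → j < max p.2 q.2 → M p.1 j = ∅))

/-- The graph `G_M` of a gridding matrix `M`. -/
def gridGraph {m n : ℕ} (M : Fin m → Fin n → Set Perm') : SimpleGraph (GridCell M) where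
  Adj p q := GridAdj M p.1 q.1
  symm := by
    constructor
    rintro ⟨p, hp⟩ ⟨q, hq⟩ ⟨hne, h⟩
    refine ⟨Ne.symm hne, ?_⟩
    rcases h with ⟨h2, hb⟩ | ⟨h1, hb⟩
    · exact Or.inl ⟨h2.symm, fun i hi hi' => by
        rw [← h2]; exact hb i (by rwa [min_comm]) (by rwa [max_comm])⟩
    · exact Or.inr ⟨h1.symm, fun j hj hj' => by
        rw [← h1]; exact hb j (by rwa [min_comm]) (by rwa [max_comm])⟩
  loopless := by constructor; rintro ⟨p, hp⟩ ⟨hne, h⟩; exact hne rfl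

/-- A class is monotone griddable if it is griddable by some matrix all of whose
entries are monotone classes or empty. -/
def MonotoneGriddable (C : Set Perm') : Prop :=
  ∃ (m n : ℕ) (M : Fin m → Fin n → Set Perm'),
    (∀ i j, IsMonotoneClass (M i j) ∨ M i j = ∅) ∧ ∀ π ∈ C, Griddable M π

/-!
In a monotone gridding with `m` columns and `n` rows, every descent of a copy of
`21 ⊕ ⋯ ⊕ 21` either straddles a column line, straddles a row line, or lies inside a
decreasing cell, and a decreasing cell contains at most one of them; so there are at most
`mn + m + n` summands. Complementing values exchanges `⊕21` and `⊖12`, which gives the other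
half of necessity.

Conversely, if `C` omits a member of `⊕21` and a member of `⊖12`, its permutations avoid
`21 ⊕ ⋯ ⊕ 21` and `12 ⊖ ⋯ ⊖ 12` with some fixed numbers `k` and `l` of summands. A discrete
intermediate value argument yields a point whose south-west and north-east quadrants avoid
`k - 1` copies of `21` and whose other two quadrants avoid `l - 1` copies of `12`. Cutting there
and recursing gives at most `5 ^ (k + l)` lines in each direction, with monotone cells. Which
cells increase depends on the permutation, so one matrix for the whole class is the
block-diagonal sum of the finitely many matrices of monotone types.
-/

open Set Function

variable {N : ℕ}

/-- A copy of `21 ⊕ ⋯ ⊕ 21` (`k` summands) in `w` restricted to `P`. -/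
def Chain21 (w : Fin N → Fin N) (P : Set (Fin N)) (k : ℕ) : Prop :=
  ∃ c : Fin k → Fin N × Fin N,
    (∀ s, (c s).1 ∈ P ∧ (c s).2 ∈ P ∧ (c s).1 < (c s).2 ∧ w (c s).2 < w (c s).1) ∧
    ∀ s t, s < t → (c s).2 < (c t).1 ∧ w (c s).1 < w (c t).2

/-- A copy of `12 ⊖ ⋯ ⊖ 12`, which becomes a copy of `21 ⊕ ⋯ ⊕ 21` once values are
complemented. -/
abbrev Chain12 (w : Fin N → Fin N) (P : Set (Fin N)) (l : ℕ) : Prop :=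
  Chain21 (Fin.rev ∘ w) P l

namespace Chain21

variable {w : Fin N → Fin N} {P Q : Set (Fin N)} {j k : ℕ}

theorem mono (h : Chain21 w P k) (hPQ : P ⊆ Q) : Chain21 w Q k :=
  let ⟨c, hc, hct⟩ := h
  ⟨c, fun s => ⟨hPQ (hc s).1, hPQ (hc s).2.1, (hc s).2.2⟩, hct⟩

theorem of_le (h : Chain21 w P k) (hjk : j ≤ k) : Chain21 w P j :=
  let ⟨c, hc, hct⟩ := h
  ⟨c ∘ Fin.castLE hjk, fun _ => hc _,
    fun _ _ hst => hct _ _ ((Fin.castLE_lt_castLE_iff _).2 hst)⟩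

theorem nonempty (h : Chain21 w P k) (hk : 0 < k) : P.Nonempty :=
  let ⟨_, hc, _⟩ := h
  ⟨_, (hc ⟨0, hk⟩).1⟩

/-- Weak separation suffices: a point common to `P` and `Q` is north-east of all of `P` and
south-west of all of `Q`, so it lies in no descent of either chain. -/
theorem union (hw : Injective w) {a b : ℕ} (hP : Chain21 w P a) (hQ : Chain21 w Q b)
    (hsep : ∀ p ∈ P, ∀ q ∈ Q, p ≤ q ∧ w p ≤ w q) : Chain21 w (P ∪ Q) (a + b) := by
  obtain ⟨c, hc, hct⟩ := hP
  obtain ⟨d, hd, hdt⟩ := hQ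
  have cross : ∀ s t, (c s).2 < (d t).1 ∧ w (c s).1 < w (d t).2 := by
    intro s t
    have h₁ := hsep _ (hc s).2.1 _ (hd t).1
    have h₂ := hsep _ (hc s).1 _ (hd t).2.1
    have h₃ := hsep _ (hc s).1 _ (hd t).1
    have := (hc s).2.2
    have := (hd t).2.2
    refine ⟨lt_of_le_of_ne h₁.1 fun he => ?_, lt_of_le_of_ne h₂.2 fun he => ?_⟩
    · have := congrArg w he
      omega
    · have := hw he
      omega
  refine ⟨Fin.append c d, fun s => ?_, fun s t hst => ?_⟩
  · induction s using Fin.addCases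
    · simpa using ⟨Or.inl (hc _).1, Or.inl (hc _).2.1, (hc _).2.2⟩
    · simpa using ⟨Or.inr (hd _).1, Or.inr (hd _).2.1, (hd _).2.2⟩
  · induction s using Fin.addCases <;> induction t using Fin.addCases <;>
      simp only [Fin.lt_def, Fin.val_castAdd, Fin.val_natAdd] at hst
    · simpa using hct _ _ (Fin.lt_def.2 hst)
    · simpa using cross _ _
    · omega
    · simpa using hdt _ _ (Fin.lt_def.2 (by omega))

theorem not_and_of_separated {X Y : Set (Fin N)} (hw : Injective w) (h : ¬ Chain21 w P (k + 1))
    (hk : 0 < k) (hX : X ⊆ P) (hY : Y ⊆ P) (hsep : ∀ p ∈ X, ∀ q ∈ Y, p ≤ q ∧ w p ≤ w q) :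
    ¬ (Chain21 w X k ∧ Chain21 w Y k) :=
  fun ⟨hX', hY'⟩ => h (((hX'.union hw hY' hsep).mono (union_subset hX hY)).of_le (by omega))

theorem exists_cons (h : Chain21 w P (k + 1)) :
    ∃ p q, p ∈ P ∧ q ∈ P ∧ p < q ∧ w q < w p ∧ Chain21 w {i ∈ P | q < i ∧ w p < w i} k := by
  obtain ⟨c, hc, hct⟩ := h
  refine ⟨(c 0).1, (c 0).2, (hc 0).1, (hc 0).2.1, (hc 0).2.2.1, (hc 0).2.2.2,
    c ∘ Fin.succ, fun s => ?_, fun s t hst => hct _ _ (Fin.succ_lt_succ_iff.2 hst)⟩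
  have h₀ := hct 0 s.succ (Fin.succ_pos s)
  have hs := hc s.succ
  exact ⟨⟨hs.1, h₀.1, by simp only [comp_apply]; omega⟩,
    ⟨hs.2.1, by simp only [comp_apply]; omega, h₀.2⟩, hs.2.2⟩

theorem image {M : ℕ} {w' : Fin M → Fin M} (f : Fin N → Fin M) (hf : StrictMono f)
    (hiso : ∀ a b, w a < w b ↔ w' (f a) < w' (f b)) (h : Chain21 w P k) :
    Chain21 w' (f '' P) k :=
  let ⟨c, hc, hct⟩ := h
  ⟨fun s => (f (c s).1, f (c s).2),
    fun s => ⟨mem_image_of_mem f (hc s).1, mem_image_of_mem f (hc s).2.1, hf (hc s).2.2.1,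
      (hiso _ _).1 (hc s).2.2.2⟩,
    fun s t hst => ⟨hf (hct s t hst).1, (hiso _ _).1 (hct s t hst).2⟩⟩

end Chain21

theorem strictMonoOn_of_not_chain21 {w : Fin N → Fin N} {P : Set (Fin N)} (hw : Injective w)
    (h : ¬ Chain21 w P 1) : StrictMonoOn w P := by
  intro p hp q hq hpq
  by_contra hle
  have hlt : w q < w p := lt_of_le_of_ne (not_lt.1 hle) (hw.ne hpq.ne')
  exact h ⟨fun _ => (p, q), fun _ => ⟨hp, hq, hpq, hlt⟩, fun s t hst => by omega⟩

theorem strictAntiOn_of_not_chain12 {w : Fin N → Fin N} {P : Set (Fin N)} (hw : Injective w)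
    (h : ¬ Chain12 w P 1) : StrictAntiOn w P := fun _ hp _ hq hpq =>
  Fin.rev_lt_rev.1 (strictMonoOn_of_not_chain21 (Fin.rev_injective.comp hw) h hp hq hpq)

theorem exists_not_and_not {p q : ℕ → Prop} {n : ℕ} (hp : ¬ p 0) (hq : ¬ q n)
    (hpq : ∀ y, ¬ (p (y + 1) ∧ q y)) : ∃ t, ¬ p t ∧ ¬ q t := by
  induction n with
  | zero => exact ⟨0, hp, hq⟩
  | succ n ih =>
    by_cases hn : q n
    · exact ⟨n + 1, fun h => hpq n ⟨h, hn⟩, hq⟩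
    · exact ih hn

/-- Going down from `y₁`, a first point without `b` would carry `b'` right below a point
with `b`. -/
theorem spread_of_cover {a a' b b' : ℕ → Prop} (ha : Monotone a) (ha' : Antitone a')
    (hb : Monotone b) (hb'b : ∀ y, ¬ (b' y ∧ b (y + 1)))
    (hcover : ∀ y, ¬ a y → ¬ a' y → ¬ b y → b' y) {y₁ y₂ : ℕ} (ha₁ : ¬ a y₁) (hb₁ : b y₁)
    (ha'₂ : ¬ a' y₂) : b y₂ := by
  rcases le_total y₁ y₂ with h | h
  · exact hb h hb₁
  refine Nat.decreasingInduction (motive := fun k _ => y₂ ≤ k → b k)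
    (fun k hk ih hk₂ => by_contra fun hbk => hb'b k ⟨?_, ih (by omega)⟩) (fun _ => hb₁) h le_rfl
  exact hcover k (fun hak => ha₁ (ha hk.le hak)) (fun hak => ha'₂ (ha' hk₂ hak)) hbk

/-- `A x y`, `A' x y`, `B x y`, `B' x y` stand for a chain of `21`s south-west of `(x, y)`, one
north-east of it, a chain of `12`s south-east of it and one north-west of it. -/
theorem exists_cut_point {A A' B B' : ℕ → ℕ → Prop} (N : ℕ)
    (hA : Monotone A) (hAy : ∀ x, Monotone (A x)) (hA' : Antitone A')
    (hA'y : ∀ x, Antitone (A' x)) (hBy : ∀ x, Monotone (B x))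
    (hA0 : ∀ x, ¬ A x 0) (hA'N : ∀ x, ¬ A' x N) (hBN : ∀ y, ¬ B N y) (hB'0 : ∀ y, ¬ B' 0 y)
    (hAA' : ∀ x y, ¬ (A (x + 1) (y + 1) ∧ A' x y))
    (hB'B : ∀ x y, ¬ (B' x y ∧ B x (y + 1)))
    (hB'B' : ∀ x y, ¬ (B' (x + 1) y ∧ B x y)) :
    ∃ x y, ¬ A x y ∧ ¬ A' x y ∧ ¬ B x y ∧ ¬ B' x y := by
  by_contra! hcover
  -- by monotonicity, such a `t` is a gap (neither `A` nor `A'`) in both columns `x` and `x + 1`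
  have common_gap : ∀ x, ∃ t, ¬ A (x + 1) t ∧ ¬ A' x t :=
    fun x => exists_not_and_not (hA0 _) (hA'N x) (hAA' x)
  have sweep : ∀ x y, ¬ A x y → ¬ A' x y → B x y := by
    intro x
    induction x with
    | zero => exact fun y hA₀ hA'₀ => by_contra fun hB => hB'0 y (hcover 0 y hA₀ hA'₀ hB)
    | succ x ih =>
      obtain ⟨t, hAt, hA't⟩ := common_gap x
      have hBt : B x t := ih t (fun h => hAt (hA (Nat.le_succ x) t h)) hA't
      have hA't' : ¬ A' (x + 1) t := fun h => hA't (hA' (Nat.le_succ x) t h)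
      have hBt' : B (x + 1) t :=
        by_contra fun hB => hB'B' x t ⟨hcover (x + 1) t hAt hA't' hB, hBt⟩
      exact fun y _ => spread_of_cover (hAy _) (hA'y _) (hBy _) (hB'B _) (hcover _) hAt hBt'
  obtain ⟨t, hAt, hA't⟩ := common_gap N
  exact hBN t (sweep N t (fun h => hAt (hA (Nat.le_succ N) t h)) hA't)

section Quadrants

variable (w : Fin N → Fin N) (P : Set (Fin N)) (x y : ℕ)

def lowerLeft : Set (Fin N) := {i ∈ P | (i : ℕ) < x ∧ (w i : ℕ) < y}

def upperRight : Set (Fin N) := {i ∈ P | x ≤ (i : ℕ) ∧ y ≤ (w i : ℕ)}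

def lowerRight : Set (Fin N) := {i ∈ P | x ≤ (i : ℕ) ∧ (w i : ℕ) < y}

def upperLeft : Set (Fin N) := {i ∈ P | (i : ℕ) < x ∧ y ≤ (w i : ℕ)}

end Quadrants

theorem exists_cut {w : Fin N → Fin N} {P : Set (Fin N)} {k l : ℕ} (hw : Injective w)
    (hk : 0 < k) (hl : 0 < l) (h21 : ¬ Chain21 w P (k + 1)) (h12 : ¬ Chain12 w P (l + 1)) :
    ∃ x y, ¬ Chain21 w (lowerLeft w P x y) k ∧ ¬ Chain21 w (upperRight w P x y) k ∧
      ¬ Chain12 w (lowerRight w P x y) l ∧ ¬ Chain12 w (upperLeft w P x y) l := by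
  have hw' : Injective (Fin.rev ∘ w) := Fin.rev_injective.comp hw
  refine exists_cut_point N ?_ ?_ ?_ ?_ ?_ ?_ ?_ ?_ ?_ ?_ ?_ ?_
  · exact fun x x' hx y h => h.mono fun i ⟨hi, h₁, h₂⟩ => ⟨hi, by omega, h₂⟩
  · exact fun x y y' hy h => h.mono fun i ⟨hi, h₁, h₂⟩ => ⟨hi, h₁, by omega⟩
  · exact fun x x' hx y h => h.mono fun i ⟨hi, h₁, h₂⟩ => ⟨hi, by omega, h₂⟩
  · exact fun x y y' hy h => h.mono fun i ⟨hi, h₁, h₂⟩ => ⟨hi, h₁, by omega⟩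
  · exact fun x y y' hy h => h.mono fun i ⟨hi, h₁, h₂⟩ => ⟨hi, h₁, by omega⟩
  · exact fun x h => by obtain ⟨i, -, -, hi⟩ := h.nonempty hk; omega
  · exact fun x h => by obtain ⟨i, -, -, hi⟩ := h.nonempty hk; omega
  · exact fun y h => by obtain ⟨i, -, hi, -⟩ := h.nonempty hl; omega
  · exact fun y h => by obtain ⟨i, -, hi, -⟩ := h.nonempty hl; omega
  · exact fun x y => Chain21.not_and_of_separated hw h21 hk (fun i hi => hi.1)
      (fun i hi => hi.1) (by rintro p ⟨-, hp₁, hp₂⟩ q ⟨-, hq₁, hq₂⟩; omega)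
  all_goals
    exact fun x y => Chain21.not_and_of_separated hw' h12 hl (fun i hi => hi.1)
      (fun i hi => hi.1) (by
        rintro p ⟨-, hp₁, hp₂⟩ q ⟨-, hq₁, hq₂⟩
        simp only [comp_apply, Fin.rev_le_rev]
        omega)

/-- The index of the column (or row) of `v` when a line is drawn just before each entry of
`cuts`. -/
def cutIndex (cuts : List ℕ) (v : ℕ) : ℕ := cuts.countP (· ≤ v)

theorem cutIndex_mono (cuts : List ℕ) : Monotone (cutIndex cuts) := fun _ _ h =>
  List.countP_mono_left fun _ _ hc => by simp only [decide_eq_true_eq] at hc ⊢; omega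

theorem cutIndex_le_length (cuts : List ℕ) (v : ℕ) : cutIndex cuts v ≤ cuts.length :=
  List.countP_le_length

theorem cutIndex_append_eq_iff {l₁ l₂ : List ℕ} {a b : ℕ} :
    cutIndex (l₁ ++ l₂) a = cutIndex (l₁ ++ l₂) b ↔
      cutIndex l₁ a = cutIndex l₁ b ∧ cutIndex l₂ a = cutIndex l₂ b := by
  have hsum : ∀ v, cutIndex (l₁ ++ l₂) v = cutIndex l₁ v + cutIndex l₂ v :=
    fun v => List.countP_append
  rw [hsum, hsum]
  obtain h | h := le_total a b <;> have := cutIndex_mono l₁ h <;> have := cutIndex_mono l₂ h <;>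
    omega

theorem cutIndex_cons_eq_iff {c : ℕ} {l : List ℕ} {a b : ℕ} :
    cutIndex (c :: l) a = cutIndex (c :: l) b ↔
      (c ≤ a ↔ c ≤ b) ∧ cutIndex l a = cutIndex l b := by
  rw [← List.singleton_append, cutIndex_append_eq_iff]
  simp only [cutIndex, List.countP_singleton, decide_eq_true_eq, and_congr_left_iff]
  intro
  by_cases ha : c ≤ a <;> by_cases hb : c ≤ b <;> simp [ha, hb]

def MonotoneCells {α : Type*} (w : Fin N → Fin N) (P : Set (Fin N)) (f : Fin N → α) : Prop :=
  ∀ i ∈ P, StrictMonoOn w {j ∈ P | f j = f i} ∨ StrictAntiOn w {j ∈ P | f j = f i}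

def cutCell (w : Fin N → Fin N) (xs ys : List ℕ) (i : Fin N) : ℕ × ℕ :=
  (cutIndex xs i, cutIndex ys (w i))

namespace MonotoneCells

variable {α β : Type*} {w : Fin N → Fin N} {P Q : Set (Fin N)} {f : Fin N → α} {g : Fin N → β}

theorem of_strictMonoOn (h : StrictMonoOn w P) : MonotoneCells w P f :=
  fun _ _ => Or.inl (h.mono fun _ hj => hj.1)

theorem of_strictAntiOn (h : StrictAntiOn w P) : MonotoneCells w P f :=
  fun _ _ => Or.inr (h.mono fun _ hj => hj.1)

theorem of_cell_iff (h : MonotoneCells w P f) (hfg : ∀ i j, g i = g j ↔ f i = f j) :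
    MonotoneCells w P g := by
  intro i hi
  have hset : {j ∈ P | g j = g i} = {j ∈ P | f j = f i} := by
    ext j
    simp [hfg]
  exact hset ▸ h i hi

theorem rev_comp (h : MonotoneCells w P f) : MonotoneCells (Fin.rev ∘ w) P f := fun i hi =>
  (h i hi).symm.imp
    (fun h _ ha _ hb hab => Fin.rev_lt_rev.2 (h ha hb hab))
    (fun h _ ha _ hb hab => Fin.rev_lt_rev.2 (h ha hb hab))

theorem cell_of_subset (h : MonotoneCells w Q g) {i : Fin N} (hi : i ∈ Q)
    (hsub : {j ∈ P | f j = f i} ⊆ {j ∈ Q | g j = g i}) :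
    StrictMonoOn w {j ∈ P | f j = f i} ∨ StrictAntiOn w {j ∈ P | f j = f i} :=
  (h i hi).imp (·.mono hsub) (·.mono hsub)

theorem not_descent_and_ascent (h : MonotoneCells w P f) {i a b c d : Fin N} (hi : i ∈ P)
    (hcell : {a, b, c, d} ⊆ {j ∈ P | f j = f i})
    (hab : a < b) (hba : w b < w a) (hcd : c < d) (hcd' : w c < w d) : False := by
  rcases h i hi with hmono | hanti
  · exact (hmono (hcell (by simp)) (hcell (by simp)) hab).asymm hba
  · exact (hanti (hcell (by simp)) (hcell (by simp)) hcd).asymm hcd'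

theorem cut {xs₁ ys₁ xs₂ ys₂ xs₃ ys₃ xs₄ ys₄ : List ℕ} (x y : ℕ)
    (h₁ : MonotoneCells w (lowerLeft w P x y) (cutCell w xs₁ ys₁))
    (h₂ : MonotoneCells w (upperRight w P x y) (cutCell w xs₂ ys₂))
    (h₃ : MonotoneCells w (lowerRight w P x y) (cutCell w xs₃ ys₃))
    (h₄ : MonotoneCells w (upperLeft w P x y) (cutCell w xs₄ ys₄)) :
    MonotoneCells w P
      (cutCell w (x :: (xs₁ ++ xs₂ ++ xs₃ ++ xs₄)) (y :: (ys₁ ++ ys₂ ++ ys₃ ++ ys₄))) := by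
  intro i hi
  set cell := cutCell w (x :: (xs₁ ++ xs₂ ++ xs₃ ++ xs₄)) (y :: (ys₁ ++ ys₂ ++ ys₃ ++ ys₄))
  have key : ∀ j, cell j = cell i →
      (x ≤ (j : ℕ) ↔ x ≤ (i : ℕ)) ∧ (y ≤ (w j : ℕ) ↔ y ≤ (w i : ℕ)) ∧
      cutCell w xs₁ ys₁ j = cutCell w xs₁ ys₁ i ∧ cutCell w xs₂ ys₂ j = cutCell w xs₂ ys₂ i ∧
      cutCell w xs₃ ys₃ j = cutCell w xs₃ ys₃ i ∧ cutCell w xs₄ ys₄ j = cutCell w xs₄ ys₄ i := by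
    intro j hj
    simp only [cell, cutCell, Prod.ext_iff, cutIndex_cons_eq_iff, cutIndex_append_eq_iff] at hj ⊢
    tauto
  by_cases hx : x ≤ (i : ℕ) <;> by_cases hy : y ≤ (w i : ℕ)
  · refine h₂.cell_of_subset ⟨hi, hx, hy⟩ fun j ⟨hj, hji⟩ => ?_
    obtain ⟨hx', hy', -, e, -⟩ := key j hji
    exact ⟨⟨hj, hx'.2 hx, hy'.2 hy⟩, e⟩
  · refine h₃.cell_of_subset ⟨hi, hx, by omega⟩ fun j ⟨hj, hji⟩ => ?_
    obtain ⟨hx', hy', -, -, e, -⟩ := key j hji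
    exact ⟨⟨hj, hx'.2 hx, not_le.1 (mt hy'.1 hy)⟩, e⟩
  · refine h₄.cell_of_subset ⟨hi, by omega, hy⟩ fun j ⟨hj, hji⟩ => ?_
    obtain ⟨hx', hy', -, -, -, e⟩ := key j hji
    exact ⟨⟨hj, not_le.1 (mt hx'.1 hx), hy'.2 hy⟩, e⟩
  · refine h₁.cell_of_subset ⟨hi, by omega, by omega⟩ fun j ⟨hj, hji⟩ => ?_
    obtain ⟨hx', hy', e, -⟩ := key j hji
    exact ⟨⟨hj, not_le.1 (mt hx'.1 hx), not_le.1 (mt hy'.1 hy)⟩, e⟩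

end MonotoneCells

theorem exists_monotoneCells_cutCell {w : Fin N → Fin N} (hw : Injective w) (k l : ℕ)
    (P : Set (Fin N)) (h21 : ¬ Chain21 w P (k + 1)) (h12 : ¬ Chain12 w P (l + 1)) :
    ∃ xs ys : List ℕ, xs.length ≤ 5 ^ (k + l) ∧ ys.length ≤ 5 ^ (k + l) ∧
      MonotoneCells w P (cutCell w xs ys) :=
  match k, l with
  | 0, _ => ⟨[], [], by simp, by simp, .of_strictMonoOn (strictMonoOn_of_not_chain21 hw h21)⟩
  | _, 0 => ⟨[], [], by simp, by simp, .of_strictAntiOn (strictAntiOn_of_not_chain12 hw h12)⟩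
  | k + 1, l + 1 => by
    obtain ⟨x, y, h₁, h₂, h₃, h₄⟩ := exists_cut hw k.succ_pos l.succ_pos h21 h12
    have h21' : ∀ Q ⊆ P, ¬ Chain21 w Q (k + 1 + 1) := fun Q hQ h => h21 (h.mono hQ)
    have h12' : ∀ Q ⊆ P, ¬ Chain12 w Q (l + 1 + 1) := fun Q hQ h => h12 (h.mono hQ)
    obtain ⟨xs₁, ys₁, hx₁, hy₁, c₁⟩ :=
      exists_monotoneCells_cutCell hw k (l + 1) _ h₁ (h12' _ fun _ hi => hi.1)
    obtain ⟨xs₂, ys₂, hx₂, hy₂, c₂⟩ :=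
      exists_monotoneCells_cutCell hw k (l + 1) _ h₂ (h12' _ fun _ hi => hi.1)
    obtain ⟨xs₃, ys₃, hx₃, hy₃, c₃⟩ :=
      exists_monotoneCells_cutCell hw (k + 1) l _ (h21' _ fun _ hi => hi.1) h₃
    obtain ⟨xs₄, ys₄, hx₄, hy₄, c₄⟩ :=
      exists_monotoneCells_cutCell hw (k + 1) l _ (h21' _ fun _ hi => hi.1) h₄
    have : 0 < 5 ^ (k + l) := by positivity
    have : 5 ^ (k + (l + 1)) = 5 * 5 ^ (k + l) := by ring
    have : 5 ^ (k + 1 + l) = 5 * 5 ^ (k + l) := by ring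
    have : 5 ^ (k + 1 + (l + 1)) = 25 * 5 ^ (k + l) := by ring
    refine ⟨_, _, ?_, ?_, .cut x y c₁ c₂ c₃ c₄⟩ <;>
      simp only [List.length_cons, List.length_append] <;> omega
termination_by k + l

section Patterns

variable {π τ : Perm'} {S : Set (Fin π.1)}

theorem IsPatternOf.strictMonoOn (h : IsPatternOf π S τ) (hτ : τ ∈ Av21) :
    StrictMonoOn π.2 S := by
  obtain ⟨g, hg, -, hsurj, hiso⟩ := h
  rintro _ hp _ hq hpq
  obtain ⟨a, rfl⟩ := hsurj _ hp
  obtain ⟨b, rfl⟩ := hsurj _ hq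
  exact (hiso a b).1 ((Monotone.strictMono_of_injective hτ τ.2.injective) (hg.lt_iff_lt.1 hpq))

theorem IsPatternOf.strictAntiOn (h : IsPatternOf π S τ) (hτ : τ ∈ Av12) :
    StrictAntiOn π.2 S := by
  obtain ⟨g, hg, -, hsurj, hiso⟩ := h
  rintro _ hp _ hq hpq
  obtain ⟨a, rfl⟩ := hsurj _ hp
  obtain ⟨b, rfl⟩ := hsurj _ hq
  exact (hiso b a).1 ((Antitone.strictAnti_of_injective hτ τ.2.injective) (hg.lt_iff_lt.1 hpq))

theorem isPatternOf_of_orderEmbedding (g : Fin τ.1 ↪o Fin π.1) (hg : range g = S)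
    (hiso : ∀ a b, τ.2 a < τ.2 b ↔ π.2 (g a) < π.2 (g b)) : IsPatternOf π S τ :=
  ⟨g, g.strictMono, fun a => hg ▸ mem_range_self a, fun _ hi => by rwa [← hg] at hi, hiso⟩

theorem exists_orderEmbedding_range_eq (S : Set (Fin N)) :
    ∃ (k : ℕ) (g : Fin k ↪o Fin N), range g = S := by
  classical
  exact ⟨_, S.toFinset.orderEmbOfFin rfl, by simp⟩

theorem exists_isPatternOf_of_strictMonoOn (h : StrictMonoOn π.2 S) :
    ∃ τ ∈ Av21, IsPatternOf π S τ := by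
  obtain ⟨k, g, hg⟩ := exists_orderEmbedding_range_eq S
  have hgS : ∀ a, g a ∈ S := fun a => hg ▸ mem_range_self a
  refine ⟨⟨k, 1⟩, fun _ _ hab => hab, isPatternOf_of_orderEmbedding g hg fun a b => ?_⟩
  exact (StrictMono.lt_iff_lt fun a b hab => h (hgS a) (hgS b) (g.strictMono hab)).symm

theorem exists_isPatternOf_of_strictAntiOn (h : StrictAntiOn π.2 S) :
    ∃ τ ∈ Av12, IsPatternOf π S τ := by
  obtain ⟨k, g, hg⟩ := exists_orderEmbedding_range_eq S
  have hgS : ∀ a, g a ∈ S := fun a => hg ▸ mem_range_self a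
  refine ⟨⟨k, Fin.revPerm⟩, fun _ _ hab => Fin.rev_le_rev.2 hab,
    isPatternOf_of_orderEmbedding g hg fun a b => ?_⟩
  exact Fin.rev_lt_rev.trans
    (StrictAnti.lt_iff_gt fun a b hab => h (hgS a) (hgS b) (g.strictMono hab)).symm

end Patterns

def IsMonotoneGridding {m n : ℕ} (π : Perm') (κ : Fin π.1 → Fin m × Fin n) : Prop :=
  IsGridding π κ ∧ MonotoneCells π.2 univ κ

theorem exists_isMonotoneGridding_of_griddable {m n : ℕ} {M : Fin m → Fin n → Set Perm'}
    (hM : ∀ i j, IsMonotoneClass (M i j) ∨ M i j = ∅) {π : Perm'} (h : Griddable M π) :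
    ∃ κ : Fin π.1 → Fin m × Fin n, IsMonotoneGridding π κ := by
  obtain ⟨κ, hgrid, hcell⟩ := h
  refine ⟨κ, hgrid, fun i _ => ?_⟩
  rw [sep_univ]
  rcases hcell (κ i).1 (κ i).2 with hempty | ⟨τ, hτ, hpat⟩
  · exact (hempty i rfl).elim
  rcases hM (κ i).1 (κ i).2 with (hM' | hM') | hM' <;> rw [hM'] at hτ
  · exact Or.inl (hpat.strictMonoOn hτ)
  · exact Or.inr (hpat.strictAntiOn hτ)
  · exact hτ.elim

theorem exists_isMonotoneGridding_of_monotoneCells {π : Perm'} {xs ys : List ℕ} {L : ℕ}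
    (h : MonotoneCells π.2 univ (cutCell π.2 xs ys)) (hx : xs.length ≤ L) (hy : ys.length ≤ L) :
    ∃ κ : Fin π.1 → Fin (L + 1) × Fin (L + 1), IsMonotoneGridding π κ := by
  have hlt : ∀ cuts : List ℕ, cuts.length ≤ L → ∀ v, cutIndex cuts v < L + 1 :=
    fun cuts hc v => Nat.lt_succ_of_le ((cutIndex_le_length cuts v).trans hc)
  refine ⟨fun i => (⟨cutIndex xs i, hlt xs hx _⟩, ⟨cutIndex ys (π.2 i), hlt ys hy _⟩),
    ⟨fun i i' hii' => cutIndex_mono xs hii', fun i i' hii' => cutIndex_mono ys hii'⟩, ?_⟩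
  exact h.of_cell_iff fun i j => by simp [cutCell, Prod.ext_iff, Fin.ext_iff]

theorem IsMonotoneGridding.complement {m n : ℕ} {π : Perm'}
    {κ : Fin π.1 → Fin m × Fin n} (h : IsMonotoneGridding π κ) :
    IsMonotoneGridding π.complement fun i => ((κ i).1, (κ i).2.rev) :=
  let ⟨⟨hcol, hrow⟩, hcell⟩ := h
  ⟨⟨hcol, fun i i' hii' => Fin.rev_le_rev.2 (hrow i' i (Fin.rev_le_rev.1 hii'))⟩,
    hcell.rev_comp.of_cell_iff fun i j => by simp [Prod.ext_iff]⟩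

theorem IsMonotoneGridding.chain21_length_le {m n : ℕ} {π : Perm'} {κ : Fin π.1 → Fin m × Fin n}
    (hκ : IsMonotoneGridding π κ) {k : ℕ} (h : Chain21 π.2 univ k) : k ≤ m * n + m + n := by
  obtain ⟨c, hc, hct⟩ := h
  obtain ⟨⟨hcol, hrow⟩, hcell⟩ := hκ
  classical
  let F : Fin k → Fin m ⊕ Fin n ⊕ (Fin m × Fin n) := fun s =>
    if (κ (c s).1).1 < (κ (c s).2).1 then .inl (κ (c s).1).1
    else if (κ (c s).2).2 < (κ (c s).1).2 then .inr (.inl (κ (c s).2).2)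
    else .inr (.inr (κ (c s).1))
  have hF : Injective F := by
    refine Injective.of_lt_imp_ne fun s t hst hF => ?_
    have hs := hc s
    have := hcol _ _ hs.2.2.1.le
    have := hrow _ _ hs.2.2.2.le
    have := hcol _ _ (hct s t hst).1.le
    have := hrow _ _ (hct s t hst).2.le
    simp only [F] at hF
    split_ifs at hF <;> simp only [reduceCtorEq, Sum.inl.injEq, Sum.inr.injEq] at hF <;>
      try omega
    have hq : κ (c s).2 = κ (c s).1 := Prod.ext (by omega) (by omega)
    refine hcell.not_descent_and_ascent (mem_univ (c s).1) (a := (c s).1) (b := (c s).2)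
      (c := (c s).2) (d := (c t).1) ?_ hs.2.2.1 hs.2.2.2 (hct s t hst).1
      (hs.2.2.2.trans ((hct s t hst).2.trans (hc t).2.2.2))
    rintro j (rfl | rfl | rfl | rfl) <;> simp [hq, hF]
  simpa [Nat.add_comm, Nat.add_left_comm] using Fintype.card_le_of_injective F hF

def typeMatrix {m n : ℕ} (T : Fin m → Fin n → Bool) (c : Fin m) (r : Fin n) : Set Perm' :=
  if T c r then Av21 else Av12

theorem typeMatrix_isMonotoneClass {m n : ℕ} (T : Fin m → Fin n → Bool) (c : Fin m)
    (r : Fin n) : IsMonotoneClass (typeMatrix T c r) ∨ typeMatrix T c r = ∅ := by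
  unfold typeMatrix
  split_ifs
  exacts [Or.inl (Or.inl rfl), Or.inl (Or.inr rfl)]

theorem IsMonotoneGridding.exists_griddable_typeMatrix {m n : ℕ} {π : Perm'}
    {κ : Fin π.1 → Fin m × Fin n} (h : IsMonotoneGridding π κ) :
    ∃ T : Fin m → Fin n → Bool, Griddable (typeMatrix T) π := by
  classical
  refine ⟨fun c r => decide (StrictMonoOn π.2 {i | κ i = (c, r)}), κ, h.1, fun c r => ?_⟩
  by_cases hcr : ∃ i, κ i = (c, r)
  swap
  · exact Or.inl fun i hi => hcr ⟨i, hi⟩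
  obtain ⟨i, hi⟩ := hcr
  have hcell := h.2 i (mem_univ i)
  rw [sep_univ, hi] at hcell
  right
  by_cases hinc : StrictMonoOn π.2 {i | κ i = (c, r)}
  · simpa [typeMatrix, hinc] using exists_isPatternOf_of_strictMonoOn hinc
  · simpa [typeMatrix, hinc] using exists_isPatternOf_of_strictAntiOn (hcell.resolve_left hinc)

def blockDiag {ι : Type*} [Fintype ι] {m n : ℕ} (M : ι → Fin m → Fin n → Set Perm')
    (i : Fin (Fintype.card ι * m)) (j : Fin (Fintype.card ι * n)) : Set Perm' :=
  if (finProdFinEquiv.symm i).1 = (finProdFinEquiv.symm j).1 then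
    M ((Fintype.equivFin ι).symm (finProdFinEquiv.symm i).1) (finProdFinEquiv.symm i).2
      (finProdFinEquiv.symm j).2
  else ∅

theorem blockDiag_isMonotoneClass {ι : Type*} [Fintype ι] {m n : ℕ}
    {M : ι → Fin m → Fin n → Set Perm'} (hM : ∀ b i j, IsMonotoneClass (M b i j) ∨ M b i j = ∅)
    (i : Fin (Fintype.card ι * m)) (j : Fin (Fintype.card ι * n)) :
    IsMonotoneClass (blockDiag M i j) ∨ blockDiag M i j = ∅ := by
  unfold blockDiag
  split_ifs
  exacts [hM _ _ _, Or.inr rfl]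

theorem griddable_blockDiag {ι : Type*} [Fintype ι] {m n : ℕ}
    {M : ι → Fin m → Fin n → Set Perm'} {π : Perm'} (b : ι) (h : Griddable (M b) π) :
    Griddable (blockDiag M) π := by
  obtain ⟨κ, ⟨hcol, hrow⟩, hcell⟩ := h
  set e := Fintype.equivFin ι
  refine ⟨fun i => (finProdFinEquiv (e b, (κ i).1), finProdFinEquiv (e b, (κ i).2)),
    ⟨fun i i' hii' => ?_, fun i i' hii' => ?_⟩, fun I J => ?_⟩
  · have := hcol i i' hii'
    simp only [Fin.le_def, finProdFinEquiv_apply_val] at this ⊢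
    omega
  · have := hrow i i' hii'
    simp only [Fin.le_def, finProdFinEquiv_apply_val] at this ⊢
    omega
  by_cases hIJ : ∃ i, (finProdFinEquiv (e b, (κ i).1), finProdFinEquiv (e b, (κ i).2)) = (I, J)
  swap
  · exact Or.inl fun i hi => hIJ ⟨i, hi⟩
  obtain ⟨i₀, hi₀⟩ := hIJ
  simp only [Prod.ext_iff] at hi₀
  obtain ⟨rfl, rfl⟩ := hi₀
  have hset : {i | (finProdFinEquiv (e b, (κ i).1), finProdFinEquiv (e b, (κ i).2)) =
      (finProdFinEquiv (e b, (κ i₀).1), finProdFinEquiv (e b, (κ i₀).2))} =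
      {i | κ i = ((κ i₀).1, (κ i₀).2)} := by
    ext i
    simp [Prod.ext_iff]
  rcases hcell (κ i₀).1 (κ i₀).2 with hempty | ⟨τ, hτ, hpat⟩
  · exact (hempty i₀ rfl).elim
  refine Or.inr ⟨τ, ?_, hset ▸ hpat⟩
  simpa [blockDiag, e] using hτ

theorem monotoneGriddable_iff_exists_isMonotoneGridding {C : Set Perm'} :
    MonotoneGriddable C ↔
      ∃ m n : ℕ, ∀ π ∈ C, ∃ κ : Fin π.1 → Fin m × Fin n, IsMonotoneGridding π κ := by
  constructor
  · rintro ⟨m, n, M, hM, hC⟩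
    exact ⟨m, n, fun π hπ => exists_isMonotoneGridding_of_griddable hM (hC π hπ)⟩
  · rintro ⟨m, n, hC⟩
    refine ⟨_, _, blockDiag (typeMatrix (m := m) (n := n)),
      blockDiag_isMonotoneClass typeMatrix_isMonotoneClass, fun π hπ => ?_⟩
    obtain ⟨κ, hκ⟩ := hC π hπ
    obtain ⟨T, hT⟩ := IsMonotoneGridding.exists_griddable_typeMatrix hκ
    exact griddable_blockDiag T hT

theorem monotoneGriddable_of_forall_not_chain {C : Set Perm'} (k l : ℕ)
    (h : ∀ π ∈ C, ¬ Chain21 π.2 univ k ∧ ¬ Chain12 π.2 univ l) : MonotoneGriddable C := by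
  rw [monotoneGriddable_iff_exists_isMonotoneGridding]
  refine ⟨5 ^ (k + l) + 1, 5 ^ (k + l) + 1, fun π hπ => ?_⟩
  obtain ⟨xs, ys, hx, hy, hcells⟩ := exists_monotoneCells_cutCell π.2.injective k l univ
    (fun hc => (h π hπ).1 (hc.of_le k.le_succ)) (fun hc => (h π hπ).2 (hc.of_le l.le_succ))
  exact exists_isMonotoneGridding_of_monotoneCells hcells hx hy

namespace Perm'

theorem dsum_apply_castAdd (σ τ : Perm') (i : Fin σ.1) :
    (σ.dsum τ).2 (Fin.castAdd τ.1 i) = Fin.castAdd τ.1 (σ.2 i) := by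
  change (finSumFinEquiv.symm.trans ((Equiv.sumCongr σ.2 τ.2).trans finSumFinEquiv)) _ = _
  simp

theorem dsum_apply_natAdd (σ τ : Perm') (j : Fin τ.1) :
    (σ.dsum τ).2 (Fin.natAdd σ.1 j) = Fin.natAdd σ.1 (τ.2 j) := by
  change (finSumFinEquiv.symm.trans ((Equiv.sumCongr σ.2 τ.2).trans finSumFinEquiv)) _ = _
  simp

@[simp]
theorem complement_complement (π : Perm') : π.complement.complement = π :=
  Sigma.ext rfl (heq_of_eq (Equiv.ext fun i => Fin.rev_rev (π.2 i)))

theorem complement_injective : Injective complement :=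
  fun σ τ h => by rw [← complement_complement σ, h, complement_complement]

theorem complement_dsum (σ τ : Perm') :
    (σ.dsum τ).complement = σ.complement.skewSum τ.complement := by
  refine Sigma.ext rfl (heq_of_eq (Equiv.ext fun i => ?_))
  change Fin.rev ((finSumFinEquiv.symm.trans ((Equiv.sumCongr σ.2 τ.2).trans finSumFinEquiv)) i) =
    (finSumFinEquiv.symm.trans
      ((Equiv.sumCongr (σ.2.trans Fin.revPerm) (τ.2.trans Fin.revPerm)).trans
        ((Equiv.sumComm (Fin σ.1) (Fin τ.1)).trans
          (finSumFinEquiv.trans (finCongr (Nat.add_comm τ.1 σ.1)))))) i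
  induction i using Fin.addCases <;> simp [Fin.ext_iff, Fin.val_rev] <;> omega

theorem complement_perm21 : perm21.complement = perm12 :=
  Sigma.ext rfl (heq_of_eq (Equiv.ext fun i => by fin_cases i <;> rfl))

theorem complement_perm12 : perm12.complement = perm21 := by
  rw [← complement_perm21, complement_complement]

theorem complement_foldr_dsum (L : List Perm') :
    (L.foldr dsum emptyPerm).complement = (L.map complement).foldr skewSum emptyPerm := by
  induction L with
  | nil => exact Sigma.ext rfl (heq_of_eq (Equiv.ext fun i => i.elim0))
  | cons σ L ih => rw [List.foldr_cons, complement_dsum, ih, List.map_cons, List.foldr_cons]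

theorem Le.complement {σ π : Perm'} (h : σ.Le π) : σ.complement.Le π.complement := by
  obtain ⟨f, hf, hiso⟩ := h
  exact ⟨f, hf, fun a b => Fin.rev_lt_rev.trans ((hiso b a).trans Fin.rev_lt_rev.symm)⟩

def LeOn (σ π : Perm') (P : Set (Fin π.1)) : Prop :=
  ∃ f : Fin σ.1 → Fin π.1, StrictMono f ∧ (∀ a, f a ∈ P) ∧
    ∀ a b, (σ.2 a < σ.2 b ↔ π.2 (f a) < π.2 (f b))

variable {σ τ π : Perm'} {P Q : Set (Fin π.1)}

theorem LeOn.mono (h : σ.LeOn π P) (hPQ : P ⊆ Q) : σ.LeOn π Q :=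
  let ⟨f, hf, hP, hiso⟩ := h
  ⟨f, hf, fun a => hPQ (hP a), hiso⟩

theorem LeOn.le (h : σ.LeOn π P) : σ.Le π :=
  let ⟨f, hf, _, hiso⟩ := h
  ⟨f, hf, hiso⟩

theorem Le.trans_leOn (hστ : σ.Le τ) (hτ : τ.LeOn π P) : σ.LeOn π P := by
  obtain ⟨f, hf, hiso⟩ := hστ
  obtain ⟨g, hg, hP, hiso'⟩ := hτ
  exact ⟨g ∘ f, hg.comp hf, fun a => hP _, fun a b => (hiso a b).trans (hiso' _ _)⟩

theorem LeOn.dsum (hσ : σ.LeOn π P) (hτ : τ.LeOn π Q)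
    (hsep : ∀ p ∈ P, ∀ q ∈ Q, p < q ∧ π.2 p < π.2 q) : (σ.dsum τ).LeOn π (P ∪ Q) := by
  obtain ⟨f, hf, hP, hiso⟩ := hσ
  obtain ⟨g, hg, hQ, hiso'⟩ := hτ
  refine ⟨Fin.append f g, fun a b => ?_, fun a => ?_, fun a b => ?_⟩
  · refine Fin.addCases (fun i => ?_) (fun i => ?_) a <;>
      refine Fin.addCases (fun j => ?_) (fun j => ?_) b <;> intro hab <;>
      simp only [Fin.append_left, Fin.append_right]
    · exact hf ((Fin.strictMono_castAdd _).lt_iff_lt.1 hab)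
    · exact (hsep _ (hP _) _ (hQ _)).1
    · exact absurd hab (not_lt.2 (Fin.le_def.2 (show (j : ℕ) ≤ σ.1 + i by omega)))
    · exact hg ((Fin.strictMono_natAdd _).lt_iff_lt.1 hab)
  · induction a using Fin.addCases <;> simp [hP, hQ]
  · refine Fin.addCases (fun i => ?_) (fun i => ?_) a <;>
      refine Fin.addCases (fun j => ?_) (fun j => ?_) b <;>
      simp only [Fin.append_left, Fin.append_right, dsum_apply_castAdd, dsum_apply_natAdd]
    · exact (Fin.strictMono_castAdd _).lt_iff_lt.trans (hiso _ _)
    · exact iff_of_true (Fin.lt_def.2 (show (σ.2 i : ℕ) < σ.1 + τ.2 j by omega))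
        (hsep _ (hP _) _ (hQ _)).2
    · exact iff_of_false (not_lt.2 (Fin.le_def.2 (show (σ.2 j : ℕ) ≤ σ.1 + τ.2 i by omega)))
        (hsep _ (hP _) _ (hQ _)).2.asymm
    · exact (Fin.strictMono_natAdd _).lt_iff_lt.trans (hiso' _ _)

end Perm'

theorem perm21_leOn {π : Perm'} {p q : Fin π.1} (hpq : p < q) (hqp : π.2 q < π.2 p) :
    perm21.LeOn π {p, q} := by
  change ∃ f : Fin 2 → Fin π.1, StrictMono f ∧ (∀ a, f a ∈ ({p, q} : Set _)) ∧
    ∀ a b, (Equiv.swap 0 1 a < Equiv.swap 0 1 b ↔ π.2 (f a) < π.2 (f b))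
  refine ⟨![p, q], fun a b hab => ?_, fun a => ?_, fun a b => ?_⟩
  · fin_cases a <;> fin_cases b <;> simp_all
  · fin_cases a <;> simp
  · fin_cases a <;> fin_cases b <;> simp [hqp, hqp.asymm]

theorem foldr_dsum_leOn_of_chain21 {π : Perm'} :
    ∀ (L : List Perm') (P : Set (Fin π.1)), (∀ α ∈ L, α.Le perm21) →
      Chain21 π.2 P L.length → (L.foldr Perm'.dsum emptyPerm).LeOn π P
  | [], _, _, _ => ⟨fun a => a.elim0, fun a => a.elim0, fun a => a.elim0, fun a => a.elim0⟩
  | α :: L, P, hL, h => by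
    obtain ⟨p, q, hp, hq, hpq, hqp, h'⟩ := h.exists_cons
    have hα := (hL α List.mem_cons_self).trans_leOn (perm21_leOn hpq hqp)
    have hrest :=
      foldr_dsum_leOn_of_chain21 L _ (fun β hβ => hL β (List.mem_cons_of_mem _ hβ)) h'
    refine (hα.dsum hrest ?_).mono
      (union_subset (insert_subset hp (singleton_subset_iff.2 hq)) fun i hi => hi.1)
    rintro a (rfl | rfl) b ⟨-, hb₁, hb₂⟩
    · exact ⟨hpq.trans hb₁, hb₂⟩
    · exact ⟨hb₁, hqp.trans hb₂⟩

theorem exists_forall_not_chain21 {C : Set Perm'} (hC : IsPermClass C)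
    (h : ¬ sumClosure21 ⊆ C) : ∃ k, ∀ π ∈ C, ¬ Chain21 π.2 univ k := by
  obtain ⟨ρ, ⟨L, hL, rfl⟩, hρ⟩ := not_subset.1 h
  exact ⟨L.length, fun π hπ hc => hρ (hC π hπ _ (foldr_dsum_leOn_of_chain21 L univ hL hc).le)⟩

theorem chain21_dsum {σ τ : Perm'} {a b : ℕ} (hσ : Chain21 σ.2 univ a)
    (hτ : Chain21 τ.2 univ b) : Chain21 (σ.dsum τ).2 univ (a + b) := by
  have h₁ := hσ.image (w' := (σ.dsum τ).2) (Fin.castAdd τ.1) (Fin.strictMono_castAdd _)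
    fun i j => by
      rw [Perm'.dsum_apply_castAdd, Perm'.dsum_apply_castAdd]
      exact (Fin.strictMono_castAdd _).lt_iff_lt.symm
  have h₂ := hτ.image (w' := (σ.dsum τ).2) (Fin.natAdd σ.1) (Fin.strictMono_natAdd _)
    fun i j => by
      rw [Perm'.dsum_apply_natAdd, Perm'.dsum_apply_natAdd]
      exact (Fin.strictMono_natAdd _).lt_iff_lt.symm
  refine (h₁.union (σ.dsum τ).2.injective h₂ ?_).mono (subset_univ _)
  rintro _ ⟨i, -, rfl⟩ _ ⟨j, -, rfl⟩
  rw [Perm'.dsum_apply_castAdd, Perm'.dsum_apply_natAdd]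
  exact ⟨Fin.le_def.2 (show (i : ℕ) ≤ σ.1 + j by omega),
    Fin.le_def.2 (show (σ.2 i : ℕ) ≤ σ.1 + τ.2 j by omega)⟩

def sum21 (k : ℕ) : Perm' := (List.replicate k perm21).foldr Perm'.dsum emptyPerm

theorem sum21_mem_sumClosure21 (k : ℕ) : sum21 k ∈ sumClosure21 :=
  ⟨_, fun _ hα => List.eq_of_mem_replicate hα ▸ ⟨id, strictMono_id, fun _ _ => Iff.rfl⟩, rfl⟩

theorem chain21_sum21 : ∀ k, Chain21 (sum21 k).2 univ k
  | 0 => ⟨fun s => s.elim0, fun s => s.elim0, fun s => s.elim0⟩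
  | k + 1 => by
    have h₁ : Chain21 perm21.2 univ 1 := by
      change Chain21 (Equiv.swap (0 : Fin 2) 1) univ 1
      exact ⟨fun _ => (0, 1), fun _ => ⟨trivial, trivial, Fin.zero_lt_one, by simp⟩,
        fun s t hst => by omega⟩
    exact (chain21_dsum h₁ (chain21_sum21 k)).of_le (Nat.le_of_eq (Nat.add_comm k 1))

theorem MonotoneGriddable.not_sumClosure21_subset {C : Set Perm'} (h : MonotoneGriddable C) :
    ¬ sumClosure21 ⊆ C := by
  rw [monotoneGriddable_iff_exists_isMonotoneGridding] at h
  obtain ⟨m, n, h⟩ := h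
  intro hC
  obtain ⟨κ, hκ⟩ := h _ (hC (sum21_mem_sumClosure21 (m * n + m + n + 1)))
  have := hκ.chain21_length_le (chain21_sum21 _)
  omega

theorem mem_skewClosure12_iff {π : Perm'} :
    π ∈ skewClosure12 ↔ π.complement ∈ sumClosure21 := by
  constructor
  · rintro ⟨L, hL, rfl⟩
    refine ⟨L.map Perm'.complement, ?_, Perm'.complement_injective ?_⟩
    · simp only [List.mem_map]
      rintro _ ⟨α, hα, rfl⟩
      exact Perm'.complement_perm12 ▸ (hL α hα).complement
    · simp [Perm'.complement_foldr_dsum, List.map_map, Function.comp_def]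
  · rintro ⟨L, hL, hπ⟩
    refine ⟨L.map Perm'.complement, ?_, ?_⟩
    · simp only [List.mem_map]
      rintro _ ⟨α, hα, rfl⟩
      exact Perm'.complement_perm21 ▸ (hL α hα).complement
    · rw [← Perm'.complement_foldr_dsum, ← hπ, Perm'.complement_complement]

theorem skewClosure12_subset_iff {C : Set Perm'} :
    skewClosure12 ⊆ C ↔ sumClosure21 ⊆ Perm'.complement ⁻¹' C :=
  ⟨fun h π hπ => h (mem_skewClosure12_iff.2 (by rwa [Perm'.complement_complement])),
    fun h π hπ => by simpa using h (mem_skewClosure12_iff.1 hπ)⟩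

theorem IsPermClass.preimage_complement {C : Set Perm'} (hC : IsPermClass C) :
    IsPermClass (Perm'.complement ⁻¹' C) :=
  fun _ hπ _ hσ => hC _ hπ _ hσ.complement

theorem MonotoneGriddable.preimage_complement {C : Set Perm'} (h : MonotoneGriddable C) :
    MonotoneGriddable (Perm'.complement ⁻¹' C) := by
  rw [monotoneGriddable_iff_exists_isMonotoneGridding] at h ⊢
  obtain ⟨m, n, h⟩ := h
  refine ⟨m, n, fun π hπ => ?_⟩
  obtain ⟨κ, hκ⟩ := h _ hπ
  rw [← Perm'.complement_complement π]
  exact ⟨_, hκ.complement⟩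

/-- **Corollary.**  A permutation class `C` is monotone griddable if and only
if it contains neither the class `⊕21` nor the class `⊖12`. -/
theorem monotoneGriddable_iff (C : Set Perm') (hC : IsPermClass C) :
    MonotoneGriddable C ↔ (¬ sumClosure21 ⊆ C ∧ ¬ skewClosure12 ⊆ C) := by
  rw [skewClosure12_subset_iff]
  refine ⟨fun h => ⟨h.not_sumClosure21_subset, h.preimage_complement.not_sumClosure21_subset⟩,
    fun ⟨h21, h12⟩ => ?_⟩
  obtain ⟨k, hk⟩ := exists_forall_not_chain21 hC h21
  obtain ⟨l, hl⟩ := exists_forall_not_chain21 hC.preimage_complement h12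
  exact monotoneGriddable_of_forall_not_chain k l fun π hπ =>
    ⟨hk π hπ, hl π.complement (by rwa [mem_preimage, Perm'.complement_complement])⟩
end

section
/- In any grid pin sequence p_1, p_2, …, for every i > 1 the pin p_{i+1} has neither the same direction as p_i nor the direction opposite to that of p_i. -/
/-! Grid pin sequences in a gridded plane.  The gridded plane is described by
the set `V` of vertical grid line coordinates and the set `H` of horizontal
grid line coordinates. -/

/-- `q` separates `a` from `b` by position. -/
def SepX (q a b : ℝ × ℝ) : Prop := min a.1 b.1 < q.1 ∧ q.1 < max a.1 b.1

/-- `q` separates `a` from `b` by value. -/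
def SepY (q a b : ℝ × ℝ) : Prop := min a.2 b.2 < q.2 ∧ q.2 < max a.2 b.2

/-- `q` lies in `rect(a,b)`. -/
def InRect (q a b : ℝ × ℝ) : Prop :=
  min a.1 b.1 ≤ q.1 ∧ q.1 ≤ max a.1 b.1 ∧ min a.2 b.2 ≤ q.2 ∧ q.2 ≤ max a.2 b.2

/-- No grid line of `S` lies strictly between `x` and `y`. -/
def NoLineBetween (S : Set ℝ) (x y : ℝ) : Prop := ∀ v ∈ S, ¬ (min x y < v ∧ v < max x y)

/-- Two horizontal coordinates lie in the same column of the grid. -/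
def SameCol (V : Set ℝ) (x y : ℝ) : Prop := ∀ v ∈ V, (v < x ↔ v < y)

/-- Two vertical coordinates lie in the same row of the grid. -/
def SameRow (H : Set ℝ) (x y : ℝ) : Prop := ∀ h ∈ H, (h < x ↔ h < y)

/-- `q` is a left pin with respect to `rect(a,b)`. -/
def IsLeftP (a b q : ℝ × ℝ) : Prop := q.1 < min a.1 b.1 ∧ SepY q a b

/-- `q` is a right pin with respect to `rect(a,b)`. -/
def IsRightP (a b q : ℝ × ℝ) : Prop := max a.1 b.1 < q.1 ∧ SepY q a b

/-- `q` is an up pin with respect to `rect(a,b)`. -/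
def IsUpP (a b q : ℝ × ℝ) : Prop := max a.2 b.2 < q.2 ∧ SepX q a b

/-- `q` is a down pin with respect to `rect(a,b)`. -/
def IsDownP (a b q : ℝ × ℝ) : Prop := q.2 < min a.2 b.2 ∧ SepX q a b

/-- Row-column agreement of `q` as a pin for the pair `(a, b)`: an up or down
pin lies in the same column of the grid as `b`, a left or right pin in the same
row as `b`. -/
def RCAgree (V H : Set ℝ) (a b q : ℝ × ℝ) : Prop :=
  ((IsUpP a b q ∨ IsDownP a b q) → SameCol V q.1 b.1) ∧
  ((IsLeftP a b q ∨ IsRightP a b q) → SameRow H q.2 b.2)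

/-- The conditions making `p 1, …, p N` a grid pin sequence with fictive pin
`p 0`: genericity of the points, adjacency of `p 1` to the origin, and for
each later pin local separation, local externality, row-column agreement and
non-interaction (it could not have been used as a grid pin earlier). -/
def PinConds (V H : Set ℝ) (p : ℕ → ℝ × ℝ) (N : ℕ) : Prop :=
  (∀ i, 1 ≤ i → i ≤ N → (p i).1 ∉ V ∧ (p i).2 ∉ H) ∧
  (∀ i j, 1 ≤ i → i ≤ N → 1 ≤ j → j ≤ N → i ≠ j →
    (p i).1 ≠ (p j).1 ∧ (p i).2 ≠ (p j).2) ∧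
  (∀ i, 1 ≤ i → i ≤ N → (p i).1 ≠ (p 0).1 ∧ (p i).2 ≠ (p 0).2) ∧
  (1 ≤ N → NoLineBetween V (p 0).1 (p 1).1 ∧ NoLineBetween H (p 0).2 (p 1).2) ∧
  (∀ i, 1 ≤ i → i + 1 ≤ N →
    (SepX (p (i+1)) (p (i-1)) (p i) ∨ SepY (p (i+1)) (p (i-1)) (p i)) ∧
    (∀ j, 1 ≤ j → j ≤ i → ¬ InRect (p (i+1)) (p (j-1)) (p j)) ∧
    RCAgree V H (p (i-1)) (p i) (p (i+1)) ∧
    (∀ j, 1 ≤ j → j < i →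
      ¬ ((SepX (p (i+1)) (p (j-1)) (p j) ∨ SepY (p (i+1)) (p (j-1)) (p j)) ∧
         RCAgree V H (p (j-1)) (p j) (p (i+1)) ∧
         (∀ j', 1 ≤ j' → j' ≤ j → ¬ InRect (p (i+1)) (p (j'-1)) (p j')))))

/-- `p 1, …, p N` is a grid pin sequence: the fictive pin `p 0` lies at the
intersection of two perpendicular grid lines and the pin conditions hold. -/
def IsGridPinSeq (V H : Set ℝ) (p : ℕ → ℝ × ℝ) (N : ℕ) : Prop :=
  (p 0).1 ∈ V ∧ (p 0).2 ∈ H ∧ PinConds V H p N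

/-- The `j`-th pin of the sequence is a left pin (`p 1` has the two directions
given by its position relative to `p 0`). -/
def PinLeft (p : ℕ → ℝ × ℝ) (j : ℕ) : Prop :=
  (j = 1 ∧ (p 1).1 < (p 0).1) ∨ (2 ≤ j ∧ IsLeftP (p (j-2)) (p (j-1)) (p j))

/-- The `j`-th pin of the sequence is a right pin. -/
def PinRight (p : ℕ → ℝ × ℝ) (j : ℕ) : Prop :=
  (j = 1 ∧ (p 0).1 < (p 1).1) ∨ (2 ≤ j ∧ IsRightP (p (j-2)) (p (j-1)) (p j))

/-- The `j`-th pin of the sequence is an up pin. -/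
def PinUp (p : ℕ → ℝ × ℝ) (j : ℕ) : Prop :=
  (j = 1 ∧ (p 0).2 < (p 1).2) ∨ (2 ≤ j ∧ IsUpP (p (j-2)) (p (j-1)) (p j))

/-- The `j`-th pin of the sequence is a down pin. -/
def PinDown (p : ℕ → ℝ × ℝ) (j : ℕ) : Prop :=
  (j = 1 ∧ (p 1).2 < (p 0).2) ∨ (2 ≤ j ∧ IsDownP (p (j-2)) (p (j-1)) (p j))

/-! If `p i` and `p (i+1)` are both horizontal pins, then `p (i+1)` separates `p (i-2)` from
`p (i-1)` by value, and by row-column agreement, applied twice, it lies in the same row as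
`p (i-1)`. Being outside `rect(p (i-2), p (i-1))`, it cannot also separate them by position,
so it is not an up or down pin for that pair. Hence `p (i+1)` already satisfies local
separation, row-column agreement and local externality with respect to `p (i-2)` and
`p (i-1)`, contradicting non-interaction. The vertical case is symmetric. -/

def IsHorizontalP (a b q : ℝ × ℝ) : Prop := IsLeftP a b q ∨ IsRightP a b q

def IsVerticalP (a b q : ℝ × ℝ) : Prop := IsUpP a b q ∨ IsDownP a b q

section Geometry

variable {V H : Set ℝ} {a b c d q : ℝ × ℝ}

theorem IsHorizontalP.sepY (h : IsHorizontalP a b q) : SepY q a b :=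
  h.elim And.right And.right

theorem IsVerticalP.sepX (h : IsVerticalP a b q) : SepX q a b :=
  h.elim And.right And.right

theorem sepX_of_sepX_of_sepX (hc : SepX c a b) (hd : SepX d b c) : SepX d a b :=
  ⟨(le_min (min_le_right _ _) hc.1.le).trans_lt hd.1,
    hd.2.trans_le (max_le (le_max_right _ _) hc.2.le)⟩

theorem sepY_of_sepY_of_sepY (hc : SepY c a b) (hd : SepY d b c) : SepY d a b :=
  ⟨(le_min (min_le_right _ _) hc.1.le).trans_lt hd.1,
    hd.2.trans_le (max_le (le_max_right _ _) hc.2.le)⟩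

theorem inRect_of_sepX_of_sepY (hx : SepX q a b) (hy : SepY q a b) : InRect q a b :=
  ⟨hx.1.le, hx.2.le, hy.1.le, hy.2.le⟩

theorem SameRow.trans {x y z : ℝ} (hxy : SameRow H x y) (hyz : SameRow H y z) :
    SameRow H x z :=
  fun h hh => (hxy h hh).trans (hyz h hh)

theorem SameCol.trans {x y z : ℝ} (hxy : SameCol V x y) (hyz : SameCol V y z) :
    SameCol V x z :=
  fun v hv => (hxy v hv).trans (hyz v hv)

theorem rcAgree_of_sepY_of_not_inRect (hy : SepY q a b) (hext : ¬ InRect q a b)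
    (hrow : SameRow H q.2 b.2) : RCAgree V H a b q :=
  ⟨fun hv => absurd (inRect_of_sepX_of_sepY (IsVerticalP.sepX hv) hy) hext, fun _ => hrow⟩

theorem rcAgree_of_sepX_of_not_inRect (hx : SepX q a b) (hext : ¬ InRect q a b)
    (hcol : SameCol V q.1 b.1) : RCAgree V H a b q :=
  ⟨fun _ => hcol, fun hh => absurd (inRect_of_sepX_of_sepY hx (IsHorizontalP.sepY hh)) hext⟩

end Geometry

namespace PinConds

variable {V H : Set ℝ} {p : ℕ → ℝ × ℝ} {N k : ℕ}

theorem rcAgree (hp : PinConds V H p N) (hk : k + 2 ≤ N) :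
    RCAgree V H (p k) (p (k + 1)) (p (k + 2)) :=
  (hp.2.2.2.2 (k + 1) (by omega) hk).2.2.1

theorem not_inRect_two_back (hp : PinConds V H p N) (hk : k + 3 ≤ N) :
    ¬ InRect (p (k + 3)) (p k) (p (k + 1)) :=
  (hp.2.2.2.2 (k + 2) (by omega) hk).2.1 (k + 1) (by omega) (by omega)

theorem not_rcAgree_two_back (hp : PinConds V H p N) (hk : k + 3 ≤ N)
    (hsep : SepX (p (k + 3)) (p k) (p (k + 1)) ∨ SepY (p (k + 3)) (p k) (p (k + 1))) :
    ¬ RCAgree V H (p k) (p (k + 1)) (p (k + 3)) := fun hrc =>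
  have ⟨_, hext, _, hnon⟩ := hp.2.2.2.2 (k + 2) (by omega) hk
  hnon (k + 1) (by omega) (by omega) ⟨hsep, hrc, fun j hj₁ hj₂ => hext j hj₁ (by omega)⟩

theorem not_isHorizontalP_twice (hp : PinConds V H p N) (hk : k + 3 ≤ N)
    (h₁ : IsHorizontalP (p (k + 1)) (p (k + 2)) (p (k + 3)))
    (h₂ : IsHorizontalP (p k) (p (k + 1)) (p (k + 2))) : False := by
  have hsep := sepY_of_sepY_of_sepY h₂.sepY h₁.sepY
  have hrow : SameRow H (p (k + 3)).2 (p (k + 1)).2 :=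
    ((hp.rcAgree hk).2 h₁).trans ((hp.rcAgree (by omega)).2 h₂)
  exact hp.not_rcAgree_two_back hk (.inr hsep)
    (rcAgree_of_sepY_of_not_inRect hsep (hp.not_inRect_two_back hk) hrow)

theorem not_isVerticalP_twice (hp : PinConds V H p N) (hk : k + 3 ≤ N)
    (h₁ : IsVerticalP (p (k + 1)) (p (k + 2)) (p (k + 3)))
    (h₂ : IsVerticalP (p k) (p (k + 1)) (p (k + 2))) : False := by
  have hsep := sepX_of_sepX_of_sepX h₂.sepX h₁.sepX
  have hcol : SameCol V (p (k + 3)).1 (p (k + 1)).1 :=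
    ((hp.rcAgree hk).1 h₁).trans ((hp.rcAgree (by omega)).1 h₂)
  exact hp.not_rcAgree_two_back hk (.inl hsep)
    (rcAgree_of_sepX_of_not_inRect hsep (hp.not_inRect_two_back hk) hcol)

end PinConds

theorem pin_direction_alternates_general (V H : Set ℝ)
    (p : ℕ → ℝ × ℝ) (N : ℕ) (hp : IsGridPinSeq V H p N)
    (i : ℕ) (hi : 1 < i) (hiN : i + 1 ≤ N) :
    ¬ ((IsLeftP (p (i-1)) (p i) (p (i+1)) ∨ IsRightP (p (i-1)) (p i) (p (i+1))) ∧
       (IsLeftP (p (i-2)) (p (i-1)) (p i) ∨ IsRightP (p (i-2)) (p (i-1)) (p i))) ∧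
    ¬ ((IsUpP (p (i-1)) (p i) (p (i+1)) ∨ IsDownP (p (i-1)) (p i) (p (i+1))) ∧
       (IsUpP (p (i-2)) (p (i-1)) (p i) ∨ IsDownP (p (i-2)) (p (i-1)) (p i))) := by
  obtain ⟨k, rfl⟩ : ∃ k, i = k + 2 := ⟨i - 2, by omega⟩
  have hconds : PinConds V H p N := hp.2.2
  exact ⟨fun ⟨h₁, h₂⟩ => hconds.not_isHorizontalP_twice hiN h₁ h₂,
    fun ⟨h₁, h₂⟩ => hconds.not_isVerticalP_twice hiN h₁ h₂⟩

/-- **Lemma.**  In a grid pin sequence, for every `i > 1` the pin `p (i+1)`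
cannot lie in the same or the opposite direction as `p i`: they cannot both be
horizontal (left/right) pins nor both be vertical (up/down) pins. -/
theorem pin_direction_alternates (V H : Set ℝ) (hV : V.Finite) (hH : H.Finite)
    (p : ℕ → ℝ × ℝ) (N : ℕ) (hp : IsGridPinSeq V H p N)
    (i : ℕ) (hi : 1 < i) (hiN : i + 1 ≤ N) :
    ¬ ((IsLeftP (p (i-1)) (p i) (p (i+1)) ∨ IsRightP (p (i-1)) (p i) (p (i+1))) ∧
       (IsLeftP (p (i-2)) (p (i-1)) (p i) ∨ IsRightP (p (i-2)) (p (i-1)) (p i))) ∧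
    ¬ ((IsUpP (p (i-1)) (p i) (p (i+1)) ∨ IsDownP (p (i-1)) (p i) (p (i+1))) ∧
       (IsUpP (p (i-2)) (p (i-1)) (p i) ∨ IsDownP (p (i-2)) (p (i-1)) (p i))) :=
  pin_direction_alternates_general V H p N hp i hi hiN
end

section
/- Let p_1,…,p_i be a grid pin sequence of length i ≥ 2 in an m×n gridded plane. If q and q′ are two points, each of which extends p_1,…,p_i to a grid pin sequence of length i+1 as a horizontal pin, and q and q′ lie in the same column of the grid, then the configurations p_1,…,p_i,q and p_1,…,p_i,q′ are order isomorphic via an isomorphism fixing p_1,…,p_i, and q and q′ lie in the same cell of the grid. The analogous statement holds when q and q′ are vertical pins lying in the same row of the grid. -/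
open Set Function Filter Topology

/-! Both `q` and `q'` lie in the row of `p i` (row-column agreement) and, by assumption, in the
same column. It then suffices that no pin `p k` has a coordinate between the corresponding
coordinates of `q` and `q'`: strictly monotone maps of `ℝ` that are the identity off a small
interval around these coordinates move `q` onto `q'` and fix every pin.

This is proved along the sequence. If `p k` (with `k < i`) were the first pin with, say, its
horizontal coordinate between those of `q` and `q'`, then one of `q`, `q'` separates `p (k - 1)`
from `p k` by position; non-interaction then forces a vertical grid line between that point and
`p k`, hence between `q` and `q'`, contradicting that they lie in the same column. The last pin
`p i` is handled by the direction of `q` and `q'`. The vertical case follows by exchanging the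
two coordinates. -/

section Interval

variable {x y a b s t : ℝ}

-- `SameRow` unfolds to the same predicate as `SameCol`; the lemmas on `SameCol` serve for both.

lemma mem_uIoo_iff : t ∈ uIoo x y ↔ (x < t ∨ y < t) ∧ (t < x ∨ t < y) := by
  simp [uIoo, inf_lt_iff, lt_sup_iff]

lemma mem_uIoo_of_mem_uIcc (h : t ∈ uIcc x y) (hx : t ≠ x) (hy : t ≠ y) : t ∈ uIoo x y := by
  simp only [mem_uIoo_iff, mem_uIcc] at *
  grind

lemma exists_endpoint_mem_uIoo (hs : s ∈ uIoo x y) (ht : t ∉ uIcc x y) :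
    ∃ z, (z = x ∨ z = y) ∧ z ∈ uIoo t s ∧ uIoo z s ⊆ uIoo x y := by
  wlog hxy : x ≤ y generalizing x y
  · obtain ⟨z, hz, hzts, hsub⟩ :=
      this (uIoo_comm x y ▸ hs) (uIcc_comm x y ▸ ht) (le_of_not_ge hxy)
    exact ⟨z, hz.symm, hzts, uIoo_comm y x ▸ hsub⟩
  rw [uIoo_of_le hxy] at hs ⊢
  rw [uIcc_of_le hxy, mem_Icc, not_and_or, not_le, not_le] at ht
  rcases ht with ht | ht
  · exact ⟨x, .inl rfl, mem_uIoo_of_lt ht hs.1, uIoo_of_lt hs.1 ▸ Ioo_subset_Ioo_right hs.2.le⟩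
  · exact ⟨y, .inr rfl, mem_uIoo_of_gt hs.2 ht, uIoo_of_gt hs.2 ▸ Ioo_subset_Ioo_left hs.1.le⟩

lemma mem_uIoo_of_notMem_uIcc (hx : x ∉ uIcc a b) (hy : y ∉ uIcc a b) (hb : b ∈ uIoo x y) :
    a ∈ uIoo x y := by
  simp only [mem_uIoo_iff, mem_uIcc, not_or, not_and_or, not_le] at *
  grind

lemma notMem_uIoo_of_mem_uIoo (hx : x ∈ uIoo a b) (hy : y ∈ uIoo a b) : b ∉ uIoo x y := by
  simp only [mem_uIoo_iff] at *
  grind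

lemma notMem_uIoo_of_sameCol {S : Set ℝ} (h : SameCol S x y) : ∀ v ∈ S, v ∉ uIoo x y := by
  intro v hv hmem
  have := h v hv
  simp only [mem_uIoo_iff] at hmem
  grind

lemma exists_mem_uIoo_of_not_sameCol {S : Set ℝ} (hx : x ∉ S) (hy : y ∉ S)
    (h : ¬ SameCol S x y) : ∃ v ∈ S, v ∈ uIoo x y := by
  simp only [SameCol, not_forall] at h
  obtain ⟨v, hv, hne⟩ := h
  refine ⟨v, hv, ?_⟩
  have : v ≠ x := fun h => hx (h ▸ hv)
  have : v ≠ y := fun h => hy (h ▸ hv)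
  simp only [mem_uIoo_iff]
  grind

lemma forall_notMem_uIcc_of_chain {L : Set ℝ} {a : ℕ → ℝ} {x y : ℝ} {n : ℕ}
    (hL : ∀ l ∈ L, l ∉ uIoo x y) (h0 : a 0 ∈ L) (hne : ∀ k ≤ n, a k ≠ x ∧ a k ≠ y)
    (hstep : ∀ k, k + 1 < n → ∀ z, (z = x ∨ z = y) → z ∈ uIoo (a k) (a (k + 1)) →
      ∃ l ∈ L, l ∈ uIoo z (a (k + 1)))
    (hlast : a n ∈ uIoo x y → a (n - 1) ∈ uIoo x y) :
    ∀ k ≤ n, a k ∉ uIcc x y := by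
  have hIoo : ∀ k ≤ n, a k ∈ uIcc x y → a k ∈ uIoo x y := fun k hk hmem =>
    mem_uIoo_of_mem_uIcc hmem (hne k hk).1 (hne k hk).2
  have hlt : ∀ k < n, a k ∉ uIcc x y := by
    intro k
    induction k with
    | zero => exact fun hn hmem => hL _ h0 (hIoo 0 hn.le hmem)
    | succ k ih =>
      intro hk hmem
      obtain ⟨z, hz, hzk, hsub⟩ := exists_endpoint_mem_uIoo (hIoo _ hk.le hmem) (ih (by omega))
      obtain ⟨l, hl, hlz⟩ := hstep k hk z hz hzk
      exact hL l hl (hsub hlz)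
  intro k hk hmem
  rcases hk.lt_or_eq with hk | rfl
  · exact hlt k hk hmem
  rcases k with _ | k
  · exact hL _ h0 (hIoo 0 le_rfl hmem)
  · exact hlt k (by omega) (uIoo_subset_uIcc_self (hlast (hIoo _ le_rfl hmem)))

end Interval

section StrictMonoExtension

lemma exists_strictMono_eq_self_of_notMem_Ioo {a b x y : ℝ} (hx : x ∈ Ioo a b)
    (hy : y ∈ Ioo a b) :
    ∃ f : ℝ → ℝ, StrictMono f ∧ (∀ t ∉ Ioo a b, f t = t) ∧ f x = y := by
  wlog hxy : x ≤ y generalizing a b x y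
  · obtain ⟨f, hf, hout, hfx⟩ := this (a := -b) (b := -a) (x := -x) (y := -y)
      ⟨neg_lt_neg hx.2, neg_lt_neg hx.1⟩ ⟨neg_lt_neg hy.2, neg_lt_neg hy.1⟩ (by linarith)
    refine ⟨fun t => -f (-t), fun u v huv => neg_lt_neg (hf (neg_lt_neg huv)), fun t ht => ?_,
      by simp [hfx]⟩
    show -f (-t) = t
    rw [hout (-t) fun h => ht ⟨neg_lt_neg_iff.1 h.2, neg_lt_neg_iff.1 h.1⟩, neg_neg]
  -- `f` below is the piecewise affine map through `(a, a)`, `(x, y)`, `(b, b)`, extended by `id`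
  obtain ⟨hax, hxb⟩ := hx
  obtain ⟨hay, hyb⟩ := hy
  set c := (y - a) / (x - a)
  set d := (b - y) / (b - x)
  have hc : 1 ≤ c := (one_le_div (by linarith)).2 (by linarith)
  have hd : 0 < d := div_pos (by linarith) (by linarith)
  have hd1 : d ≤ 1 := (div_le_one (by linarith)).2 (by linarith)
  have hca : y + c * (a - x) = a := by simp only [c]; field_simp; ring
  have hdb : y + d * (b - x) = b := by simp only [d]; field_simp; ring
  refine ⟨fun t => max t (min (y + c * (t - x)) (y + d * (t - x))), fun u v huv => ?_,
    fun t ht => max_eq_left ?_, by simp [hxy]⟩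
  · exact max_lt_max huv (min_lt_min (by nlinarith) (by nlinarith))
  · rw [mem_Ioo, not_and_or, not_lt, not_lt] at ht
    rcases ht with ht | ht
    · exact min_le_of_left_le (by nlinarith)
    · exact min_le_of_right_le (by nlinarith)

lemma exists_Ioo_notMem_of_finite {S : Set ℝ} {x y : ℝ} (hS : S.Finite)
    (h : ∀ s ∈ S, s ∉ uIcc x y) : ∃ a b, x ∈ Ioo a b ∧ y ∈ Ioo a b ∧ ∀ s ∈ S, s ∉ Ioo a b := by
  have hev : ∀ᶠ δ in 𝓝[>] (0 : ℝ), ∀ s ∈ S, s ∉ Ioo (x ⊓ y - δ) (x ⊔ y + δ) := by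
    refine hS.eventually_all.2 fun s hs => ?_
    have hs' := h s hs
    rw [uIcc, mem_Icc, not_and_or, not_le, not_le] at hs'
    rcases hs' with hlt | hlt
    · filter_upwards [nhdsWithin_le_nhds (eventually_lt_nhds (sub_pos.2 hlt))] with δ hδ hmem
      linarith [hmem.1]
    · filter_upwards [nhdsWithin_le_nhds (eventually_lt_nhds (sub_pos.2 hlt))] with δ hδ hmem
      linarith [hmem.2]
  obtain ⟨δ, hδ, hδpos : 0 < δ⟩ := (hev.and self_mem_nhdsWithin).exists
  refine ⟨x ⊓ y - δ, x ⊔ y + δ, ⟨?_, ?_⟩, ⟨?_, ?_⟩, hδ⟩ <;>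
    linarith [min_le_left x y, min_le_right x y, le_max_left x y, le_max_right x y]

lemma exists_strictMono_of_notMem_uIcc {S : Set ℝ} {x y : ℝ} (hS : S.Finite)
    (h : ∀ s ∈ S, s ∉ uIcc x y) : ∃ f : ℝ → ℝ, StrictMono f ∧ (∀ s ∈ S, f s = s) ∧ f x = y := by
  obtain ⟨a, b, hx, hy, hS⟩ := exists_Ioo_notMem_of_finite hS h
  obtain ⟨f, hf, hout, hfx⟩ := exists_strictMono_eq_self_of_notMem_Ioo hx hy
  exact ⟨f, hf, fun s hs => hout s (hS s hs), hfx⟩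

end StrictMonoExtension

section Pins

variable {V H : Set ℝ} {p : ℕ → ℝ × ℝ} {i : ℕ} {q : ℝ × ℝ}

lemma sepY_of_horizontal {a b : ℝ × ℝ} (h : IsLeftP a b q ∨ IsRightP a b q) : SepY q a b := by
  rcases h with h | h <;> exact h.2

lemma fst_notMem_uIcc_of_horizontal {a b : ℝ × ℝ} (h : IsLeftP a b q ∨ IsRightP a b q) :
    q.1 ∉ uIcc a.1 b.1 := by
  rcases h with h | h
  · exact fun hmem => (not_le.2 h.1) hmem.1
  · exact fun hmem => (not_le.2 h.1) hmem.2

lemma exists_line_between_of_not_rcAgree {a b w : ℝ × ℝ} (hw : w.1 ∉ V ∧ w.2 ∉ H)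
    (hb : b.1 ∉ V ∧ b.2 ∉ H) (hext : ¬ InRect w a b)
    (hnon : SepX w a b ∨ SepY w a b → ¬ RCAgree V H a b w) :
    (SepX w a b → ∃ v ∈ V, v ∈ uIoo w.1 b.1) ∧ (SepY w a b → ∃ h ∈ H, h ∈ uIoo w.2 b.2) := by
  have hsep : ¬ (SepX w a b ∧ SepY w a b) := fun ⟨hx, hy⟩ =>
    hext ⟨hx.1.le, hx.2.le, hy.1.le, hy.2.le⟩
  refine ⟨fun hx => ?_, fun hy => ?_⟩
  · have hrc := hnon (.inl hx)
    simp only [RCAgree, not_and_or, Classical.not_imp] at hrc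
    rcases hrc with ⟨-, hcol⟩ | ⟨hlr, -⟩
    · exact exists_mem_uIoo_of_not_sameCol hw.1 hb.1 hcol
    · exact absurd ⟨hx, sepY_of_horizontal hlr⟩ hsep
  · have hrc := hnon (.inr hy)
    simp only [RCAgree, not_and_or, Classical.not_imp] at hrc
    rcases hrc with ⟨hud, -⟩ | ⟨-, hrow⟩
    · exact absurd ⟨by rcases hud with h | h <;> exact h.2, hy⟩ hsep
    · exact exists_mem_uIoo_of_not_sameCol hw.2 hb.2 hrow

namespace IsGridPinSeq

lemma origin_mem (hq : IsGridPinSeq V H (update p (i + 1) q) (i + 1)) :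
    (p 0).1 ∈ V ∧ (p 0).2 ∈ H := by
  simpa only [update_of_ne (Nat.succ_ne_zero i).symm] using And.intro hq.1 hq.2.1

lemma lastPin_ne (hq : IsGridPinSeq V H (update p (i + 1) q) (i + 1)) {k : ℕ} (hk : k ≤ i) :
    q.1 ≠ (p k).1 ∧ q.2 ≠ (p k).2 := by
  obtain ⟨-, -, -, hdist, hdist0, -⟩ := hq
  rcases Nat.eq_zero_or_pos k with rfl | hk0
  · have h := hdist0 (i + 1) (by omega) le_rfl
    simpa (disch := omega) only [update_self, update_of_ne] using h
  · have h := hdist (i + 1) k (by omega) le_rfl hk0 (by omega) (by omega)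
    simpa (disch := omega) only [update_self, update_of_ne] using h

lemma lastPin_rcAgree (hq : IsGridPinSeq V H (update p (i + 1) q) (i + 1)) (hi : 1 ≤ i) :
    RCAgree V H (p (i - 1)) (p i) q := by
  obtain ⟨-, -, -, -, -, -, hpins⟩ := hq
  have h := (hpins i hi le_rfl).2.2.1
  simpa (disch := omega) only [update_self, update_of_ne] using h

lemma exists_line_of_lastPin_sep (hq : IsGridPinSeq V H (update p (i + 1) q) (i + 1)) {j : ℕ}
    (hj : j + 1 < i) :
    (SepX q (p j) (p (j + 1)) → ∃ v ∈ V, v ∈ uIoo q.1 (p (j + 1)).1) ∧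
      (SepY q (p j) (p (j + 1)) → ∃ h ∈ H, h ∈ uIoo q.2 (p (j + 1)).2) := by
  obtain ⟨-, -, hgen, -, -, -, hpins⟩ := hq
  obtain ⟨-, hext, -, hnon⟩ := hpins i (by omega) le_rfl
  have hnon' := fun hsep hrc =>
    hnon (j + 1) (by omega) hj ⟨hsep, hrc, fun j' h1 _ => hext j' h1 (by omega)⟩
  have hext' := hext (j + 1) (by omega) hj.le
  have hqV := hgen (i + 1) (by omega) le_rfl
  have hpV := hgen (j + 1) (by omega) (by omega)
  simp (disch := omega) only [update_self, update_of_ne, Nat.add_sub_cancel] at hnon' hext' hqV hpV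
  exact exists_line_between_of_not_rcAgree hqV hpV hext' hnon'

end IsGridPinSeq

theorem notMem_uIcc_of_horizontal_pins {q' : ℝ × ℝ} (hi : 1 ≤ i)
    (hq : IsGridPinSeq V H (update p (i + 1) q) (i + 1))
    (hq' : IsGridPinSeq V H (update p (i + 1) q') (i + 1))
    (hd : IsLeftP (p (i - 1)) (p i) q ∨ IsRightP (p (i - 1)) (p i) q)
    (hd' : IsLeftP (p (i - 1)) (p i) q' ∨ IsRightP (p (i - 1)) (p i) q')
    (hcol : SameCol V q.1 q'.1) :
    (∀ k ≤ i, (p k).1 ∉ uIcc q.1 q'.1 ∧ (p k).2 ∉ uIcc q.2 q'.2) ∧ SameRow H q.2 q'.2 := by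
  have hrow : SameRow H q.2 q'.2 := fun h hh =>
    ((hq.lastPin_rcAgree hi).2 hd h hh).trans ((hq'.lastPin_rcAgree hi).2 hd' h hh).symm
  have hsep : ∀ k, k + 1 < i →
      (∀ z, (z = q.1 ∨ z = q'.1) → z ∈ uIoo (p k).1 (p (k + 1)).1 →
        ∃ v ∈ V, v ∈ uIoo z (p (k + 1)).1) ∧
      (∀ z, (z = q.2 ∨ z = q'.2) → z ∈ uIoo (p k).2 (p (k + 1)).2 →
        ∃ h ∈ H, h ∈ uIoo z (p (k + 1)).2) := by
    intro k hk
    refine ⟨?_, ?_⟩ <;> rintro z (rfl | rfl)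
    exacts [(hq.exists_line_of_lastPin_sep hk).1, (hq'.exists_line_of_lastPin_sep hk).1,
      (hq.exists_line_of_lastPin_sep hk).2, (hq'.exists_line_of_lastPin_sep hk).2]
  refine ⟨fun k hk => ⟨?_, ?_⟩, hrow⟩
  · refine forall_notMem_uIcc_of_chain (a := fun k => (p k).1) (notMem_uIoo_of_sameCol hcol)
      hq.origin_mem.1 (fun k hk => ⟨(hq.lastPin_ne hk).1.symm, (hq'.lastPin_ne hk).1.symm⟩)
      (fun k hk => (hsep k hk).1) (fun hmem => ?_) k hk
    exact mem_uIoo_of_notMem_uIcc (fst_notMem_uIcc_of_horizontal hd)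
      (fst_notMem_uIcc_of_horizontal hd') hmem
  · refine forall_notMem_uIcc_of_chain (a := fun k => (p k).2) (notMem_uIoo_of_sameCol hrow)
      hq.origin_mem.2 (fun k hk => ⟨(hq.lastPin_ne hk).2.symm, (hq'.lastPin_ne hk).2.symm⟩)
      (fun k hk => (hsep k hk).2) (fun hmem => ?_) k hk
    exact absurd hmem (notMem_uIoo_of_mem_uIoo (sepY_of_horizontal hd) (sepY_of_horizontal hd'))

end Pins

section Swap

variable {V H : Set ℝ}

lemma inRect_swap {q a b : ℝ × ℝ} : InRect q.swap a.swap b.swap ↔ InRect q a b :=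
  ⟨fun ⟨h1, h2, h3, h4⟩ => ⟨h3, h4, h1, h2⟩, fun ⟨h1, h2, h3, h4⟩ => ⟨h3, h4, h1, h2⟩⟩

lemma rcAgree_swap {q a b : ℝ × ℝ} : RCAgree H V a.swap b.swap q.swap ↔ RCAgree V H a b q :=
  ⟨fun ⟨h1, h2⟩ => ⟨fun h => h2 h.symm, fun h => h1 h.symm⟩,
    fun ⟨h1, h2⟩ => ⟨fun h => h2 h.symm, fun h => h1 h.symm⟩⟩

lemma IsGridPinSeq.swap {p : ℕ → ℝ × ℝ} {N : ℕ} (h : IsGridPinSeq V H p N) :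
    IsGridPinSeq H V (Prod.swap ∘ p) N := by
  obtain ⟨h0V, h0H, hgen, hdist, hdist0, hfirst, hpins⟩ := h
  refine ⟨h0H, h0V, fun k h1 h2 => (hgen k h1 h2).symm,
    fun k l h1 h2 h3 h4 h5 => (hdist k l h1 h2 h3 h4 h5).symm,
    fun k h1 h2 => (hdist0 k h1 h2).symm, fun h1 => (hfirst h1).symm, fun k h1 h2 => ?_⟩
  obtain ⟨hsep, hext, hrc, hnon⟩ := hpins k h1 h2
  refine ⟨hsep.symm, fun j h1 h2 => inRect_swap.not.2 (hext j h1 h2), rcAgree_swap.2 hrc,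
    fun j h1 h2 ⟨hsep', hrc', hext'⟩ => hnon j h1 h2 ⟨hsep'.symm, rcAgree_swap.1 hrc', ?_⟩⟩
  exact fun j' h1' h2' => inRect_swap.not.1 (hext' j' h1' h2')

end Swap

lemma exists_strictMono_fixing_pins {p : ℕ → ℝ × ℝ} {i : ℕ} {q q' : ℝ × ℝ}
    (h : ∀ k ≤ i, (p k).1 ∉ uIcc q.1 q'.1 ∧ (p k).2 ∉ uIcc q.2 q'.2) :
    ∃ f g : ℝ → ℝ, StrictMono f ∧ StrictMono g ∧
      (∀ j, 1 ≤ j → j ≤ i → f (p j).1 = (p j).1 ∧ g (p j).2 = (p j).2) ∧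
      f q.1 = q'.1 ∧ g q.2 = q'.2 := by
  obtain ⟨f, hf, hfix, hfq⟩ := exists_strictMono_of_notMem_uIcc ((finite_Iic i).image _)
    (by rintro _ ⟨k, hk, rfl⟩; exact (h k hk).1)
  obtain ⟨g, hg, hgix, hgq⟩ := exists_strictMono_of_notMem_uIcc ((finite_Iic i).image _)
    (by rintro _ ⟨k, hk, rfl⟩; exact (h k hk).2)
  exact ⟨f, g, hf, hg, fun j _ hj => ⟨hfix _ ⟨j, hj, rfl⟩, hgix _ ⟨j, hj, rfl⟩⟩, hfq, hgq⟩

theorem pin_placement_unique_general (V H : Set ℝ)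
    (p : ℕ → ℝ × ℝ) (i : ℕ) (hi : 2 ≤ i) :
    (∀ q q' : ℝ × ℝ,
      IsGridPinSeq V H (Function.update p (i+1) q) (i+1) →
      IsGridPinSeq V H (Function.update p (i+1) q') (i+1) →
      (IsLeftP (p (i-1)) (p i) q ∨ IsRightP (p (i-1)) (p i) q) →
      (IsLeftP (p (i-1)) (p i) q' ∨ IsRightP (p (i-1)) (p i) q') →
      SameCol V q.1 q'.1 →
      ((∃ f g : ℝ → ℝ, StrictMono f ∧ StrictMono g ∧
          (∀ j, 1 ≤ j → j ≤ i → f (p j).1 = (p j).1 ∧ g (p j).2 = (p j).2) ∧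
          f q.1 = q'.1 ∧ g q.2 = q'.2) ∧
        SameCol V q.1 q'.1 ∧ SameRow H q.2 q'.2)) ∧
    (∀ q q' : ℝ × ℝ,
      IsGridPinSeq V H (Function.update p (i+1) q) (i+1) →
      IsGridPinSeq V H (Function.update p (i+1) q') (i+1) →
      (IsUpP (p (i-1)) (p i) q ∨ IsDownP (p (i-1)) (p i) q) →
      (IsUpP (p (i-1)) (p i) q' ∨ IsDownP (p (i-1)) (p i) q') →
      SameRow H q.2 q'.2 →
      ((∃ f g : ℝ → ℝ, StrictMono f ∧ StrictMono g ∧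
          (∀ j, 1 ≤ j → j ≤ i → f (p j).1 = (p j).1 ∧ g (p j).2 = (p j).2) ∧
          f q.1 = q'.1 ∧ g q.2 = q'.2) ∧
        SameCol V q.1 q'.1 ∧ SameRow H q.2 q'.2)) := by
  refine ⟨fun q q' hq hq' hd hd' hcol => ?_, fun q q' hq hq' hd hd' hrow => ?_⟩
  · obtain ⟨hgap, hrow⟩ := notMem_uIcc_of_horizontal_pins (by omega) hq hq' hd hd' hcol
    exact ⟨exists_strictMono_fixing_pins hgap, hcol, hrow⟩
  · -- `Prod.swap` exchanges rows and columns, turning vertical pins into horizontal ones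
    have hswap : ∀ r, IsGridPinSeq V H (update p (i + 1) r) (i + 1) →
        IsGridPinSeq H V (update (Prod.swap ∘ p) (i + 1) r.swap) (i + 1) := fun r hr => by
      simpa only [comp_update] using hr.swap
    obtain ⟨hgap, hcol⟩ :=
      notMem_uIcc_of_horizontal_pins (by omega) (hswap q hq) (hswap q' hq') hd.symm hd'.symm hrow
    exact ⟨exists_strictMono_fixing_pins fun k hk => (hgap k hk).symm, hcol, hrow⟩

/-- **Lemma.**  Let `p 1, …, p i` be a grid pin sequence of length `i ≥ 2`.
Any two points `q, q'` extending it by one horizontal pin and lying in the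
same column of the grid give order-isomorphic configurations (via an
isomorphism fixing `p 1, …, p i`), and `q` and `q'` lie in the same cell of the
grid; analogously for vertical pins lying in the same row. -/
theorem pin_placement_unique (V H : Set ℝ) (hV : V.Finite) (hH : H.Finite)
    (p : ℕ → ℝ × ℝ) (i : ℕ) (hi : 2 ≤ i) (hp : IsGridPinSeq V H p i) :
    (∀ q q' : ℝ × ℝ,
      IsGridPinSeq V H (Function.update p (i+1) q) (i+1) →
      IsGridPinSeq V H (Function.update p (i+1) q') (i+1) →
      (IsLeftP (p (i-1)) (p i) q ∨ IsRightP (p (i-1)) (p i) q) →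
      (IsLeftP (p (i-1)) (p i) q' ∨ IsRightP (p (i-1)) (p i) q') →
      SameCol V q.1 q'.1 →
      ((∃ f g : ℝ → ℝ, StrictMono f ∧ StrictMono g ∧
          (∀ j, 1 ≤ j → j ≤ i → f (p j).1 = (p j).1 ∧ g (p j).2 = (p j).2) ∧
          f q.1 = q'.1 ∧ g q.2 = q'.2) ∧
        SameCol V q.1 q'.1 ∧ SameRow H q.2 q'.2)) ∧
    (∀ q q' : ℝ × ℝ,
      IsGridPinSeq V H (Function.update p (i+1) q) (i+1) →
      IsGridPinSeq V H (Function.update p (i+1) q') (i+1) →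
      (IsUpP (p (i-1)) (p i) q ∨ IsDownP (p (i-1)) (p i) q) →
      (IsUpP (p (i-1)) (p i) q' ∨ IsDownP (p (i-1)) (p i) q') →
      SameRow H q.2 q'.2 →
      ((∃ f g : ℝ → ℝ, StrictMono f ∧ StrictMono g ∧
          (∀ j, 1 ≤ j → j ≤ i → f (p j).1 = (p j).1 ∧ g (p j).2 = (p j).2) ∧
          f q.1 = q'.1 ∧ g q.2 = q'.2) ∧
        SameCol V q.1 q'.1 ∧ SameRow H q.2 q'.2)) :=
  pin_placement_unique_general V H p i hi
end

section
/- Every permutation class containing only finitely many simple permutations is partially well-ordered, i.e. contains no infinite antichain under the containment order. -/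
/-! A bad sequence in `C` that is minimal with respect to length has all its terms of length at
least two, so each term is an inflation of a simple permutation of `C` by strictly shorter
permutations. Minimality makes the set of these shorter permutations partially well-ordered. Only
finitely many simple skeletons occur, so infinitely many terms share one skeleton `σ`, and Dickson's
lemma on their tuples of blocks gives two comparable terms, inflation being monotone in the
blocks. -/

open Set.PartiallyWellOrderedOn

namespace Perm'

theorem Le.refl (π : Perm') : π.Le π := ⟨id, strictMono_id, fun _ _ => Iff.rfl⟩

theorem Le.trans {σ τ π : Perm'} (hστ : σ.Le τ) (hτπ : τ.Le π) : σ.Le π := by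
  obtain ⟨f, hf, hfv⟩ := hστ
  obtain ⟨g, hg, hgv⟩ := hτπ
  exact ⟨g ∘ f, hg.comp hf, fun a b => (hfv a b).trans (hgv (f a) (f b))⟩

instance : IsPreorder Perm' Perm'.Le where
  refl := Le.refl
  trans _ _ _ := Le.trans

theorem le_of_length_le_one {σ π : Perm'} (hσ : σ.1 ≤ 1) (hσπ : σ.1 ≤ π.1) : σ.Le π := by
  have : Subsingleton (Fin σ.1) := Fin.subsingleton_iff_le_one.mpr hσ
  refine ⟨Fin.castLE hσπ, Fin.strictMono_castLE hσπ, fun a b => ?_⟩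
  simp [Subsingleton.elim a b]

theorem two_le_length_of_isBadSeq {s : Set Perm'} {f : ℕ → Perm'} (hf : IsBadSeq Perm'.Le s f)
    (n : ℕ) : 2 ≤ (f n).1 := by
  by_contra! hn
  by_cases hle : (f n).1 ≤ (f (n + 1)).1
  · exact hf.2 n (n + 1) n.lt_succ_self (le_of_length_le_one (by omega) hle)
  · exact hf.2 (n + 1) (n + 2) (by omega) (le_of_length_le_one (by omega) (by omega))

end Perm'

theorem exists_perm_lt_iff_of_injective {α : Type*} [LinearOrder α] {k : ℕ} {v : Fin k → α}
    (hv : Function.Injective v) : ∃ τ : Equiv.Perm (Fin k), ∀ a b, τ a < τ b ↔ v a < v b := by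
  set s := Tuple.sort v
  have hs : StrictMono (v ∘ s) :=
    (Tuple.monotone_sort v).strictMono_of_injective (hv.comp s.injective)
  refine ⟨s.symm, fun a b => ?_⟩
  conv_rhs => rw [← s.apply_symm_apply a, ← s.apply_symm_apply b]
  exact hs.lt_iff_lt.symm

theorem IsPatternOf.le {π τ : Perm'} {S : Set (Fin π.1)} (h : IsPatternOf π S τ) : τ.Le π :=
  let ⟨g, hg, _, _, hgv⟩ := h
  ⟨g, hg, hgv⟩

theorem exists_isPatternOf (π : Perm') (S : Finset (Fin π.1)) :
    ∃ τ : Perm', τ.1 = S.card ∧ IsPatternOf π S τ := by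
  set g := S.orderEmbOfFin rfl
  obtain ⟨τ, hτ⟩ := exists_perm_lt_iff_of_injective (π.2.injective.comp g.injective)
  refine ⟨⟨S.card, τ⟩, rfl, g, g.strictMono, S.orderEmbOfFin_mem rfl, fun i hi => ?_, hτ⟩
  rwa [← S.range_orderEmbOfFin rfl] at hi

theorem IsPatternOf.exists_embedding {π π' τ τ' : Perm'} {S : Set (Fin π.1)}
    {S' : Set (Fin π'.1)} (h : IsPatternOf π S τ) (h' : IsPatternOf π' S' τ') (hle : τ.Le τ') :
    ∃ e : S → S', (∀ i j : S, i.1 < j.1 → (e i).1 < (e j).1) ∧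
      ∀ i j : S, (π.2 i < π.2 j ↔ π'.2 (e i) < π'.2 (e j)) := by
  obtain ⟨g, hg, -, hSg, hgv⟩ := h
  obtain ⟨g', hg', hg'S, -, hg'v⟩ := h'
  obtain ⟨f, hf, hfv⟩ := hle
  choose ind hind using fun i : S => hSg i.1 i.2
  refine ⟨fun i => ⟨g' (f (ind i)), hg'S _⟩, fun i j hij => ?_, fun i j => ?_⟩
  · rw [← hind i, ← hind j, hg.lt_iff_lt] at hij
    exact hg' (hf hij)
  · rw [← hind i, ← hind j, ← hgv, hfv, hg'v]

/-- `κ` sends each point of `π` to the point of `σ` whose block contains it, so that `π` is an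
inflation of `σ` whose blocks are the fibres of `κ`. -/
structure IsBlockMap (π σ : Perm') (κ : Fin π.1 → Fin σ.1) : Prop where
  monotone : Monotone κ
  surjective : Function.Surjective κ
  lt_iff_lt : ∀ i j, κ i ≠ κ j → (σ.2 (κ i) < σ.2 (κ j) ↔ π.2 i < π.2 j)

namespace IsBlockMap

variable {π ρ σ : Perm'}

theorem id (π : Perm') : IsBlockMap π π id :=
  ⟨monotone_id, Function.surjective_id, fun _ _ _ => Iff.rfl⟩

theorem comp {κ : Fin π.1 → Fin ρ.1} {κ' : Fin ρ.1 → Fin σ.1} (hκ' : IsBlockMap ρ σ κ')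
    (hκ : IsBlockMap π ρ κ) : IsBlockMap π σ (κ' ∘ κ) where
  monotone := hκ'.monotone.comp hκ.monotone
  surjective := hκ'.surjective.comp hκ.surjective
  lt_iff_lt i j hij :=
    (hκ'.lt_iff_lt _ _ hij).trans (hκ.lt_iff_lt i j fun h => hij (congrArg κ' h))

theorem le {κ : Fin π.1 → Fin σ.1} (hκ : IsBlockMap π σ κ) : σ.Le π := by
  set r := Function.surjInv hκ.surjective
  have hκr : ∀ t, κ (r t) = t := Function.surjInv_eq hκ.surjective
  refine ⟨r, fun t t' htt' => hκ.monotone.reflect_lt (by rwa [hκr, hκr]), fun t t' => ?_⟩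
  rcases eq_or_ne t t' with rfl | htt'
  · simp
  · simpa only [hκr] using hκ.lt_iff_lt (r t) (r t') (by rwa [hκr, hκr])

theorem exists_isPatternOf_fiber {κ : Fin π.1 → Fin σ.1} (hκ : IsBlockMap π σ κ) (hσ : 2 ≤ σ.1)
    (t : Fin σ.1) : ∃ τ : Perm', IsPatternOf π {i | κ i = t} τ ∧ τ.1 < π.1 := by
  classical
  obtain ⟨τ, hτ, hτS⟩ := exists_isPatternOf π (Finset.univ.filter fun i => κ i = t)
  refine ⟨τ, by simpa using hτS, ?_⟩
  obtain ⟨t', ht'⟩ := Fintype.exists_ne_of_one_lt_card (by rw [Fintype.card_fin]; omega) t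
  obtain ⟨i, rfl⟩ := hκ.surjective t'
  rw [hτ]
  exact (Finset.card_lt_univ_of_notMem (x := i) (by simpa using ht')).trans_eq
    (Finset.card_fin _)

end IsBlockMap

/-- `π` is the inflation `σ[α 0, …, α (k-1)]` of `σ`. -/
def IsInflation (π σ : Perm') (α : Fin σ.1 → Perm') : Prop :=
  ∃ κ, IsBlockMap π σ κ ∧ ∀ t, IsPatternOf π {i | κ i = t} (α t)

theorem IsInflation.le_of_forall_le {π π' σ : Perm'} {α α' : Fin σ.1 → Perm'}
    (h : IsInflation π σ α) (h' : IsInflation π' σ α') (hle : ∀ t, (α t).Le (α' t)) :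
    π.Le π' := by
  obtain ⟨κ, hκ, hα⟩ := h
  obtain ⟨κ', hκ', hα'⟩ := h'
  choose e he_lt he_val using fun t => (hα t).exists_embedding (hα' t) (hle t)
  set F : Fin π.1 → Fin π'.1 := fun i => e (κ i) ⟨i, rfl⟩
  have hF : ∀ t i (hi : κ i = t), F i = e t ⟨i, hi⟩ := by rintro t i rfl; rfl
  have hκ'F : ∀ i, κ' (F i) = κ i := fun i => (e (κ i) ⟨i, rfl⟩).2
  refine ⟨F, fun i j hij => ?_, fun i j => ?_⟩
  · rcases eq_or_ne (κ i) (κ j) with hκij | hκij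
    · rw [hF (κ i) i rfl, hF (κ i) j hκij.symm]
      exact he_lt _ _ _ hij
    · refine hκ'.monotone.reflect_lt ?_
      rw [hκ'F, hκ'F]
      exact lt_of_le_of_ne (hκ.monotone hij.le) hκij
  · rcases eq_or_ne (κ i) (κ j) with hκij | hκij
    · rw [hF (κ i) i rfl, hF (κ i) j hκij.symm]
      exact he_val _ ⟨i, rfl⟩ ⟨j, hκij.symm⟩
    · rw [← hκ.lt_iff_lt i j hκij, ← hκ'.lt_iff_lt (F i) (F j) (by rwa [hκ'F, hκ'F]), hκ'F,
        hκ'F]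

theorem exists_isBlockMap_of_monotone (π : Perm') {r : Fin π.1 → Fin π.1} (hr : Monotone r)
    (hrv : ∀ i j, r i ≠ r j → (π.2 (r i) < π.2 (r j) ↔ π.2 i < π.2 j)) :
    ∃ ρ κ, ρ.1 = (Finset.univ.image r).card ∧ IsBlockMap π ρ κ := by
  classical
  obtain ⟨ρ, hρ, g, hg, hgS, hSg, hgv⟩ := exists_isPatternOf π (Finset.univ.image r)
  choose κ hκ using fun i => hSg (r i) (by simp)
  refine ⟨ρ, κ, hρ, fun i j hij => ?_, fun t => ?_, fun i j hij => ?_⟩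
  · rw [← hg.le_iff_le, hκ, hκ]
    exact hr hij
  · obtain ⟨i, -, hi⟩ := Finset.mem_image.mp (hgS t)
    exact ⟨i, hg.injective (by rw [hκ, hi])⟩
  · rw [hgv, hκ, hκ]
    exact hrv i j fun h => hij (hg.injective (by rw [hκ, hκ, h]))

theorem exists_isBlockMap_of_not_isSimple {π : Perm'} (hπ : 2 ≤ π.1) (hs : ¬ IsSimple π) :
    ∃ ρ κ, 2 ≤ ρ.1 ∧ ρ.1 < π.1 ∧ IsBlockMap π ρ κ := by
  classical
  simp only [IsSimple, not_forall, not_or] at hs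
  obtain ⟨a, b, hab, ⟨c, hc⟩, hne, hlen⟩ := hs
  set I : Fin π.1 → Prop := fun i => a ≤ i ∧ i ≤ b
  have hI : ∀ i, I i ↔ c ≤ (π.2 i : ℕ) ∧ (π.2 i : ℕ) ≤ c + (b - a) := hc
  set r : Fin π.1 → Fin π.1 := fun i => if I i then a else i
  have hr : Monotone r := by
    intro i j hij
    simp only [r, I, Fin.le_def] at hij ⊢
    split_ifs <;> omega
  -- the values on `[a, b]` form an interval, so a point outside it compares alike with all of them
  have hrv : ∀ i j, r i ≠ r j → (π.2 (r i) < π.2 (r j) ↔ π.2 i < π.2 j) := by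
    have haI : I a := ⟨le_rfl, hab⟩
    intro i j hij
    have hai := hI a
    have hi := hI i
    have hj := hI j
    simp only [r] at hij ⊢
    simp only [I, Fin.le_def, Fin.lt_def] at haI hai hi hj hij ⊢
    split_ifs at hij ⊢ <;> omega
  obtain ⟨ρ, κ, hρ, hκ⟩ := exists_isBlockMap_of_monotone π hr hrv
  refine ⟨ρ, κ, ?_, ?_, hκ⟩
  · obtain ⟨x, hx⟩ : ∃ x, ¬ I x := by
      by_contra! h
      have h0 := (h ⟨0, by omega⟩).1
      have hlast := (h ⟨π.1 - 1, by omega⟩).2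
      simp only [Fin.le_def] at h0 hlast
      omega
    have hra : r a = a := if_pos ⟨le_rfl, hab⟩
    have hrx : r x = x := if_neg hx
    rw [hρ]
    refine Finset.one_lt_card.mpr ⟨a, ?_, x, ?_, fun h => hx (h ▸ ⟨le_rfl, hab⟩)⟩
    · simpa using ⟨a, hra⟩
    · simpa using ⟨x, hrx⟩
  · have hb : b ∉ Finset.univ.image r := by
      simp only [Finset.mem_image, Finset.mem_univ, true_and, not_exists]
      intro i hi
      simp only [r] at hi
      split_ifs at hi with hiI
      · exact hne hi
      · exact hiI (hi ▸ ⟨hab, le_rfl⟩)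
    rw [hρ]
    exact (Finset.card_lt_univ_of_notMem hb).trans_eq (Finset.card_fin _)

theorem exists_isBlockMap_isSimple (π : Perm') (hπ : 2 ≤ π.1) :
    ∃ σ κ, IsSimple σ ∧ 2 ≤ σ.1 ∧ IsBlockMap π σ κ := by
  obtain ⟨n, hn⟩ : ∃ n, π.1 = n := ⟨_, rfl⟩
  induction n using Nat.strong_induction_on generalizing π with
  | _ n ih =>
    by_cases hs : IsSimple π
    · exact ⟨π, id, hs, hπ, IsBlockMap.id π⟩
    obtain ⟨ρ, κ, hρ, hρπ, hκ⟩ := exists_isBlockMap_of_not_isSimple hπ hs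
    obtain ⟨σ, κ', hσs, hσ, hκ'⟩ := ih ρ.1 (hn ▸ hρπ) ρ hρ rfl
    exact ⟨σ, κ' ∘ κ, hσs, hσ, hκ'.comp hκ⟩

theorem Set.PartiallyWellOrderedOn.of_isMinBadSeq {α : Type*} {r : α → α → Prop} [IsTrans α r]
    {rk : α → ℕ} {s : Set α} {f : ℕ → α} (hf : IsBadSeq r s f)
    (hmin : ∀ n, IsMinBadSeq r rk s n f) (hs : ∀ a n, r a (f n) → a ∈ s) :
    {a | ∃ n, r a (f n) ∧ rk a < rk (f n)}.PartiallyWellOrderedOn r := by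
  rw [iff_forall_not_isBadSeq]
  rintro g ⟨hgD, hg⟩
  choose n hgn hrk using hgD
  set k₀ := Function.argmin n
  set m := n k₀
  have hm : ∀ k, m ≤ n k := fun k => Function.argmin_le n k
  -- replacing the tail of `f` from `m` on by the tail of `g` from `k₀` on gives a bad sequence
  -- whose `m`-th term has smaller rank than `f m`
  set h : ℕ → α := fun j => if j < m then f j else g (k₀ + (j - m))
  refine hmin m h (fun j hj => (if_pos hj).symm) (by simpa [h] using hrk k₀) ⟨fun j => ?_, ?_⟩
  · by_cases hj : j < m
    · simpa [h, hj] using hf.1 j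
    · simpa [h, hj] using hs _ _ (hgn _)
  · intro i j hij hr
    simp only [h] at hr
    split_ifs at hr with hi hj hj
    · exact hf.2 i j hij hr
    · exact hf.2 i _ (hi.trans_le (hm _)) (_root_.trans hr (hgn _))
    · omega
    · exact hg _ _ (by omega) hr

theorem isPwo_of_partiallyWellOrderedOn {C : Set Perm'} (hC : C.PartiallyWellOrderedOn Perm'.Le) :
    IsPwo C := by
  rintro ⟨g, hgC, hg⟩
  obtain ⟨m, n, hmn, hle⟩ := hC.exists_lt hgC
  exact hg m n hmn.ne hle

/-- **Theorem (Albert–Atkinson).**  Every permutation class containing only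
finitely many simple permutations is partially well-ordered. -/
theorem pwo_of_finitely_many_simples (C : Set Perm') (hC : IsPermClass C)
    (h : {π ∈ C | IsSimple π}.Finite) : IsPwo C := by
  refine isPwo_of_partiallyWellOrderedOn ?_
  rw [iff_not_exists_isMinBadSeq (fun π : Perm' => π.1)]
  rintro ⟨f, hf, hmin⟩
  set D := {τ : Perm' | ∃ n, τ.Le (f n) ∧ τ.1 < (f n).1}
  have hD : D.PartiallyWellOrderedOn Perm'.Le :=
    .of_isMinBadSeq hf hmin fun τ n hτ => hC _ (hf.1 n) _ hτ
  choose σ κ hσs hσ hκ using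
    fun n => exists_isBlockMap_isSimple (f n) (Perm'.two_le_length_of_isBadSeq hf n)
  -- pigeonhole: `σ` is constant along `φ`
  obtain ⟨φ, hφ⟩ := (h.partiallyWellOrderedOn (r := Eq)).exists_monotone_subseq (f := σ)
    fun n => ⟨hC _ (hf.1 n) _ (hκ n).le, hσs n⟩
  have hinfl : ∀ k, ∃ α : Fin (σ (φ 0)).1 → Perm',
      IsInflation (f (φ k)) (σ (φ 0)) α ∧ ∀ t, α t ∈ D := by
    intro k
    rw [hφ 0 k k.zero_le]
    choose α hα hαlen using (hκ (φ k)).exists_isPatternOf_fiber (hσ (φ k))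
    exact ⟨α, ⟨κ (φ k), hκ (φ k), hα⟩, fun t => ⟨φ k, (hα t).le, hαlen t⟩⟩
  choose α hα hαD using hinfl
  obtain ⟨m, n, hmn, hle⟩ := (Set.PartiallyWellOrderedOn.pi fun _ => hD).exists_lt (f := α)
    fun k => Set.mem_univ_pi.2 (hαD k)
  exact hf.2 _ _ (φ.strictMono hmn) ((hα m).le_of_forall_le (hα n) hle)
end
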